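/- arXiv:2406.06516 — 6 statements merged into one kernel-verified Lean document; each statement's English description precedes it below -/
import Mathlib

section
/- Let x_1,...,x_n and y_1,...,y_n be real numbers. For every γ in (0,1), the left γ-quantile of the empirical distribution (1/n)∑δ_{x_i} and the left γ-quantile of (1/n)∑δ_{y_i} differ in absolute value by at most max_{i∈[n]} |x_i − y_i|. -/
/-- Left `γ`-quantile of a CDF `F`. -/
noncomputable def Qminus (γ : ℝ) (F : ℝ → ℝ) : ℝ := sInf {x | γ ≤ F x}

/-- Empirical CDF of the points `x 0, ..., x (n-1)`. -/
noncomputable def ecdf {n : ℕ} (x : Fin n → ℝ) (t : ℝ) : ℝ :=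
  ((Finset.univ.filter (fun i => x i ≤ t)).card : ℝ) / n

lemma aux_key {n : ℕ} (hn : 0 < n) (x y : Fin n → ℝ) (γ : ℝ)
    (hγ0 : 0 < γ) (hγ1 : γ ≤ 1) (M : ℝ) (hM : ∀ i, x i - y i ≤ M) :
    Qminus γ (ecdf x) ≤ Qminus γ (ecdf y) + M := by
  have hne : Nonempty (Fin n) := Fin.pos_iff_nonempty.mp hn
  have huniv : (Finset.univ : Finset (Fin n)).Nonempty := Finset.univ_nonempty
  have hn' : (0 : ℝ) < n := by positivity
  have hyne : {t | γ ≤ ecdf y t}.Nonempty := by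
    refine ⟨Finset.univ.sup' huniv y, ?_⟩
    have heq : Finset.univ.filter (fun i => y i ≤ Finset.univ.sup' huniv y)
        = Finset.univ := by
      apply Finset.filter_true_of_mem
      intro i _
      exact Finset.le_sup' y (Finset.mem_univ i)
    simp only [Set.mem_setOf_eq, ecdf, heq, Finset.card_univ, Fintype.card_fin]
    rw [div_self (by positivity)]
    exact hγ1
  have hbdd : BddBelow {t | γ ≤ ecdf x t} := by
    refine ⟨Finset.univ.inf' huniv x, ?_⟩
    intro t ht
    simp only [Set.mem_setOf_eq, ecdf] at ht
    have hc : (Finset.univ.filter (fun i => x i ≤ t)).Nonempty := by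
      rw [← Finset.card_pos]
      by_contra h
      push_neg at h
      have h0 : (Finset.univ.filter (fun i => x i ≤ t)).card = 0 := by omega
      rw [h0] at ht
      simp at ht
      linarith
    obtain ⟨i, hi⟩ := hc
    simp only [Finset.mem_filter] at hi
    exact le_trans (Finset.inf'_le x (Finset.mem_univ i)) hi.2
  have key : ∀ t ∈ {t | γ ≤ ecdf y t}, Qminus γ (ecdf x) ≤ t + M := by
    intro t ht
    have hsub : Finset.univ.filter (fun i => y i ≤ t)
        ⊆ Finset.univ.filter (fun i => x i ≤ t + M) := by
      intro i hi
      simp only [Finset.mem_filter, Finset.mem_univ, true_and] at hi ⊢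
      have := hM i
      linarith
    have hmono : ecdf y t ≤ ecdf x (t + M) := by
      unfold ecdf
      gcongr
    have : t + M ∈ {t | γ ≤ ecdf x t} := le_trans ht hmono
    exact csInf_le hbdd this
  have : Qminus γ (ecdf x) - M ≤ sInf {t | γ ≤ ecdf y t} := by
    apply le_csInf hyne
    intro t ht
    have := key t ht
    linarith
  unfold Qminus at this ⊢
  linarith

theorem stmt0 {n : ℕ} (hn : 0 < n) (x y : Fin n → ℝ) (γ : ℝ)
    (hγ : γ ∈ Set.Ioo (0 : ℝ) 1) :
    |Qminus γ (ecdf x) - Qminus γ (ecdf y)| ≤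
      Finset.univ.sup' (Finset.univ_nonempty_iff.mpr (Fin.pos_iff_nonempty.mp hn))
        (fun i => |x i - y i|) := by
  obtain ⟨hγ0, hγ1⟩ := hγ
  set M := Finset.univ.sup' (Finset.univ_nonempty_iff.mpr (Fin.pos_iff_nonempty.mp hn))
      (fun i => |x i - y i|) with hMdef
  have h1 : ∀ i, x i - y i ≤ M := fun i =>
    le_trans (le_abs_self _)
      (Finset.le_sup' (fun i => |x i - y i|) (Finset.mem_univ i))
  have h2 : ∀ i, y i - x i ≤ M := fun i => by
    have := Finset.le_sup' (fun i => |x i - y i|) (Finset.mem_univ i)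
    have h := neg_abs_le (x i - y i)
    simp only [← hMdef] at this
    linarith [this]
  rw [abs_sub_le_iff]
  constructor
  · have := aux_key hn x y γ hγ0 hγ1.le M h1
    linarith
  · have := aux_key hn y x γ hγ0 hγ1.le M h2
    linarith
end

section
/- Let x_1,...,x_n be independent Bernoulli random variables with means p_i, p̄ = (1/n)∑p_i, and let q ∈ [0,1], r > 0, ε > 0, δ ∈ (0,1) satisfy |q − p̄| ≤ r. Then with probability at least 1 − δ, p̄ − (1/n)∑x_i < εr + √(2q(1−q)log(1/δ)/n) + (2/3 + 1/(2ε))·log(1/δ)/n. -/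
/-!
Chernoff's bound at `-s`, combined with the Bernstein estimate
`exp u ≤ 1 + u + u² / (2 (1 - |u| / 3))`, bounds `P(∑ xᵢ ≤ ∑ pᵢ - a)` by
`exp (V s² / (2 (1 - s / 3)) - s a)` with `V = ∑ pᵢ (1 - pᵢ)`; optimising over `s < 3` this is at
most `e^{-L}` as soon as `a ≥ 2L/3 + √(2LV)`. The perturbation enters only through
`V ≤ n p̄ (1 - p̄) ≤ n (q (1 - q) + r)`, and AM–GM `√(2Lnr) ≤ nεr + L/(2ε)` turns this threshold
into `n` times the stated deviation.
-/

open MeasureTheory ProbabilityTheory Real Finset Nat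

lemma exp_le_one_add_add_sq_div {u : ℝ} (hu : |u| < 3) :
    exp u ≤ 1 + u + u ^ 2 / (2 * (1 - |u| / 3)) := by
  have hseries : HasSum (fun k ↦ u ^ (k + 2) / (k + 2)!) (exp u - 1 - u) := by
    have := (hasSum_nat_add_iff' 2).2 (NormedSpace.expSeries_div_hasSum_exp u)
    simpa [← exp_eq_exp_ℝ, Finset.sum_range_succ, sub_sub] using this
  have hgeom : HasSum (fun k : ℕ ↦ u ^ 2 / 2 * (|u| / 3) ^ k)
      (u ^ 2 / 2 * (1 - |u| / 3)⁻¹) :=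
    (hasSum_geometric_of_lt_one (by positivity) (by linarith)).mul_left _
  have hterm (k : ℕ) : u ^ (k + 2) / (k + 2)! ≤ u ^ 2 / 2 * (|u| / 3) ^ k := by
    have hfact : (2 * 3 ^ k : ℝ) ≤ (k + 2)! := by
      have := Nat.factorial_mul_pow_le_factorial (m := 2) (n := k)
      rw [add_comm 2 k] at this
      exact_mod_cast this
    calc u ^ (k + 2) / (k + 2)! ≤ |u| ^ (k + 2) / (k + 2)! := by
          gcongr ?_ / _; exact (le_abs_self _).trans (abs_pow u _).le
      _ ≤ |u| ^ (k + 2) / (2 * 3 ^ k) := by gcongr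
      _ = u ^ 2 / 2 * (|u| / 3) ^ k := by rw [pow_add, sq_abs, div_pow]; field_simp
  have := hasSum_le hterm hseries hgeom
  have : u ^ 2 / (2 * (1 - |u| / 3)) = u ^ 2 / 2 * (1 - |u| / 3)⁻¹ := by
    rw [← div_div, div_eq_mul_inv (u ^ 2 / 2)]
  linarith

lemma exp_mul_le_one_add_add_sq_mul {s y : ℝ} (hs₀ : 0 ≤ s) (hs₃ : s < 3) (hy : |y| ≤ 1) :
    exp (s * y) ≤ 1 + s * y + y ^ 2 * (s ^ 2 / (2 * (1 - s / 3))) := by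
  have hsy : |s * y| ≤ s := by
    rw [abs_mul, abs_of_nonneg hs₀]; exact mul_le_of_le_one_right hs₀ hy
  refine (exp_le_one_add_add_sq_div (hsy.trans_lt hs₃)).trans ?_
  have : (s * y) ^ 2 / (2 * (1 - |s * y| / 3)) ≤ (s * y) ^ 2 / (2 * (1 - s / 3)) := by
    gcongr
    linarith
  linarith [show (s * y) ^ 2 / (2 * (1 - s / 3)) = y ^ 2 * (s ^ 2 / (2 * (1 - s / 3))) by ring]

lemma sqrt_add_le_sqrt_add_sqrt {x y : ℝ} (hx : 0 ≤ x) (hy : 0 ≤ y) : √(x + y) ≤ √x + √y := by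
  rw [sqrt_le_left (by positivity)]
  nlinarith [sq_sqrt hx, sq_sqrt hy, sqrt_nonneg x, sqrt_nonneg y]

lemma sqrt_mul_le_mul_add_div {x y ε : ℝ} (hx : 0 ≤ x) (hy : 0 ≤ y) (hε : 0 < ε) :
    √(x * y) ≤ ε * x + y / (4 * ε) := by
  rw [sqrt_le_left (by positivity)]
  have : x * y = 4 * (ε * x) * (y / (4 * ε)) := by field_simp
  nlinarith [sq_nonneg (ε * x - y / (4 * ε))]

lemma mul_one_sub_le_add_abs_sub {p q : ℝ} (hp : p ∈ Set.Icc (0 : ℝ) 1)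
    (hq : q ∈ Set.Icc (0 : ℝ) 1) :
    p * (1 - p) ≤ q * (1 - q) + |p - q| := by
  have key : p * (1 - p) - q * (1 - q) = (p - q) * (1 - p - q) := by ring
  have : |1 - p - q| ≤ 1 := abs_le.2 ⟨by linarith [hp.2, hq.2], by linarith [hp.1, hq.1]⟩
  have := (le_abs_self _).trans ((abs_mul (p - q) (1 - p - q)).le.trans
    (mul_le_of_le_one_right (abs_nonneg _) this))
  linarith

lemma sum_mul_one_sub_le_card_mul {ι : Type*} [Fintype ι] (p : ι → ℝ) :
    ∑ i, p i * (1 - p i) ≤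
      Fintype.card ι * ((∑ i, p i) / Fintype.card ι * (1 - (∑ i, p i) / Fintype.card ι)) := by
  rcases (Fintype.card ι).eq_zero_or_pos with h | h
  · simp [Fintype.card_eq_zero_iff.1 h]
  have hn : (0 : ℝ) < Fintype.card ι := by exact_mod_cast h
  have hcs := sq_sum_le_card_mul_sum_sq (s := univ) (f := p)
  rw [Finset.card_univ] at hcs
  set P := ∑ i, p i
  set n : ℝ := (Fintype.card ι : ℝ)
  have hsplit : ∑ i, p i * (1 - p i) = P - ∑ i, p i ^ 2 := by
    rw [← sum_sub_distrib]; exact sum_congr rfl fun i _ ↦ by ring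
  have hbar : n * (P / n * (1 - P / n)) = P - P ^ 2 / n := by field_simp
  have : P ^ 2 / n ≤ ∑ i, p i ^ 2 := by rw [div_le_iff₀ hn]; linarith
  linarith

section Bernoulli

variable {Ω : Type*} [MeasurableSpace Ω] {μ : Measure Ω} [IsProbabilityMeasure μ] {X : Ω → ℝ}

lemma integrable_of_bernoulli (hX : Measurable X) (hB : ∀ ω, X ω = 0 ∨ X ω = 1) :
    Integrable X μ :=
  .of_bound hX.aestronglyMeasurable 1 (ae_of_all _ fun ω ↦ by rcases hB ω with h | h <;> simp [h])

lemma integral_comp_of_bernoulli (hX : Measurable X) (hB : ∀ ω, X ω = 0 ∨ X ω = 1) (f : ℝ → ℝ) :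
    ∫ ω, f (X ω) ∂μ = (1 - ∫ ω, X ω ∂μ) * f 0 + (∫ ω, X ω ∂μ) * f 1 := by
  have hpt (ω : Ω) : f (X ω) = f 0 + (f 1 - f 0) * X ω := by
    rcases hB ω with h | h <;> simp [h]
  simp_rw [hpt]
  rw [integral_add (integrable_const _) ((integrable_of_bernoulli hX hB).const_mul _),
    integral_const_mul]
  simp only [integral_const, probReal_univ, one_smul]
  ring

lemma integral_mem_Icc_of_bernoulli (hX : Measurable X) (hB : ∀ ω, X ω = 0 ∨ X ω = 1) :
    ∫ ω, X ω ∂μ ∈ Set.Icc (0 : ℝ) 1 := by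
  have hle : 0 ≤ ∫ ω, 1 - X ω ∂μ := integral_nonneg fun ω ↦ by rcases hB ω with h | h <;> simp [h]
  rw [integral_comp_of_bernoulli hX hB (fun y ↦ 1 - y)] at hle
  exact ⟨integral_nonneg fun ω ↦ by rcases hB ω with h | h <;> simp [h], by linarith⟩

lemma mgf_le_of_bernoulli (hX : Measurable X) (hB : ∀ ω, X ω = 0 ∨ X ω = 1) {s : ℝ}
    (hs₀ : 0 ≤ s) (hs₃ : s < 3) :
    mgf X μ (-s) ≤ exp (-s * ∫ ω, X ω ∂μ +
      (∫ ω, X ω ∂μ) * (1 - ∫ ω, X ω ∂μ) * (s ^ 2 / (2 * (1 - s / 3)))) := by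
  obtain ⟨hp₀, hp₁⟩ := integral_mem_Icc_of_bernoulli (μ := μ) hX hB
  set p := ∫ ω, X ω ∂μ with hp
  set c := s ^ 2 / (2 * (1 - s / 3))
  have h₀ := exp_mul_le_one_add_add_sq_mul hs₀ hs₃ (y := p) (abs_le.2 ⟨by linarith, hp₁⟩)
  have h₁ := exp_mul_le_one_add_add_sq_mul hs₀ hs₃ (y := p - 1)
    (abs_le.2 ⟨by linarith, by linarith⟩)
  have hmgf : mgf X μ (-s) = ((1 - p) * exp (s * p) + p * exp (s * (p - 1))) * exp (-s * p) := by
    rw [mgf, integral_comp_of_bernoulli hX hB (fun y ↦ exp (-s * y)), add_mul, mul_assoc,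
      mul_assoc, ← exp_add, ← exp_add, ← hp]
    ring_nf
  rw [hmgf, exp_add, mul_comm (exp _)]
  gcongr
  calc (1 - p) * exp (s * p) + p * exp (s * (p - 1))
      ≤ (1 - p) * (1 + s * p + p ^ 2 * c) + p * (1 + s * (p - 1) + (p - 1) ^ 2 * c) := by
        gcongr
    _ = 1 + p * (1 - p) * c := by ring
    _ ≤ exp (p * (1 - p) * c) := by linarith [add_one_le_exp (p * (1 - p) * c)]

end Bernoulli

lemma exists_le_mul_sub_mul_sq_div {L V a : ℝ} (hL : 0 < L) (hV : 0 ≤ V)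
    (ha : 2 / 3 * L + √(2 * L * V) ≤ a) :
    ∃ s, 0 ≤ s ∧ s < 3 ∧ L ≤ s * a - V * (s ^ 2 / (2 * (1 - s / 3))) := by
  have hsq : √(2 * L * V) ^ 2 = 2 * L * V := sq_sqrt (by positivity)
  have hsqrt := sqrt_nonneg (2 * L * V)
  rcases hV.eq_or_lt with rfl | hV
  · exact ⟨3 / 2, by norm_num, by norm_num, by simp at ha; linarith⟩
  -- `s = a / (V + a / 3)` is the minimiser, where the exponent equals `a² / (2 (V + a / 3))`.
  have ha₀ : 0 < a := by nlinarith
  set d := V + a / 3 with hd_def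
  have hd : 0 < d := by positivity
  refine ⟨a / d, by positivity, by rw [div_lt_iff₀ hd]; linarith, ?_⟩
  have hval : a / d * a - V * ((a / d) ^ 2 / (2 * (1 - a / d / 3))) = a ^ 2 / (2 * d) := by
    have : 1 - a / d / 3 = V / d := by field_simp; ring
    rw [this]
    field_simp
    ring
  rw [hval, le_div_iff₀ (by positivity)]
  nlinarith [mul_nonneg ha₀.le (show 0 ≤ a - 2 / 3 * L - √(2 * L * V) by linarith),
    mul_nonneg hsqrt (show 0 ≤ a - √(2 * L * V) by linarith)]

section Bernstein

variable {Ω ι : Type*} [MeasurableSpace Ω] {μ : Measure Ω} [IsProbabilityMeasure μ] [Fintype ι]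
  {x : ι → Ω → ℝ}

theorem measureReal_sum_le_sub_le_exp_of_bernoulli (hmeas : ∀ i, Measurable (x i))
    (hB : ∀ i ω, x i ω = 0 ∨ x i ω = 1) (hind : iIndepFun x μ) {s : ℝ} (hs₀ : 0 ≤ s)
    (hs₃ : s < 3) (a : ℝ) :
    μ.real {ω | ∑ i, x i ω ≤ ∑ i, ∫ ω, x i ω ∂μ - a} ≤
      exp ((∑ i, (∫ ω, x i ω ∂μ) * (1 - ∫ ω, x i ω ∂μ)) * (s ^ 2 / (2 * (1 - s / 3))) - s * a) := by
  set p := fun i ↦ ∫ ω, x i ω ∂μ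
  set c := s ^ 2 / (2 * (1 - s / 3))
  have hint : Integrable (fun ω ↦ exp (-s * ∑ i, x i ω)) μ := by
    refine .of_bound (by fun_prop) 1 (ae_of_all _ fun ω ↦ ?_)
    have : 0 ≤ ∑ i, x i ω := sum_nonneg fun i _ ↦ by rcases hB i ω with h | h <;> simp [h]
    rw [norm_of_nonneg (exp_pos _).le, exp_le_one_iff]
    nlinarith
  have hmgf : mgf (fun ω ↦ ∑ i, x i ω) μ (-s) ≤
      exp (-s * ∑ i, p i + (∑ i, p i * (1 - p i)) * c) := by
    have : (fun ω ↦ ∑ i, x i ω) = ∑ i, x i := by ext; simp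
    rw [this, hind.mgf_sum hmeas, mul_sum, sum_mul, ← sum_add_distrib, exp_sum]
    exact prod_le_prod (fun i _ ↦ mgf_nonneg) fun i _ ↦ mgf_le_of_bernoulli (hmeas i) (hB i) hs₀ hs₃
  calc μ.real {ω | ∑ i, x i ω ≤ ∑ i, p i - a}
      ≤ exp (-(-s) * (∑ i, p i - a)) * mgf (fun ω ↦ ∑ i, x i ω) μ (-s) :=
        measure_le_le_exp_mul_mgf _ (by linarith) hint
    _ ≤ exp (-(-s) * (∑ i, p i - a)) * exp (-s * ∑ i, p i + (∑ i, p i * (1 - p i)) * c) := by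
        gcongr
    _ = exp ((∑ i, p i * (1 - p i)) * c - s * a) := by rw [← exp_add]; ring_nf

theorem measureReal_sum_le_sub_le_exp_neg_of_bernoulli (hmeas : ∀ i, Measurable (x i))
    (hB : ∀ i ω, x i ω = 0 ∨ x i ω = 1) (hind : iIndepFun x μ) {L a : ℝ} (hL : 0 < L)
    (ha : 2 / 3 * L + √(2 * L * ∑ i, (∫ ω, x i ω ∂μ) * (1 - ∫ ω, x i ω ∂μ)) ≤ a) :
    μ.real {ω | ∑ i, x i ω ≤ ∑ i, ∫ ω, x i ω ∂μ - a} ≤ exp (-L) := by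
  have hV : 0 ≤ ∑ i, (∫ ω, x i ω ∂μ) * (1 - ∫ ω, x i ω ∂μ) := sum_nonneg fun i _ ↦ by
    obtain ⟨h₀, h₁⟩ := integral_mem_Icc_of_bernoulli (μ := μ) (hmeas i) (hB i)
    nlinarith
  obtain ⟨s, hs₀, hs₃, hs⟩ := exists_le_mul_sub_mul_sq_div hL hV ha
  exact (measureReal_sum_le_sub_le_exp_of_bernoulli hmeas hB hind hs₀ hs₃ a).trans
    (exp_le_exp.2 (by linarith))

end Bernstein

lemma two_div_three_mul_add_sqrt_le {n : ℕ} (hn : 0 < n) {L V p q r ε : ℝ} (hL : 0 ≤ L)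
    (hε : 0 < ε) (hp : p ∈ Set.Icc (0 : ℝ) 1) (hq : q ∈ Set.Icc (0 : ℝ) 1) (hqp : |q - p| ≤ r)
    (hV : V ≤ n * (p * (1 - p))) :
    2 / 3 * L + √(2 * L * V) ≤
      n * (ε * r + √(2 * q * (1 - q) * L / n) + (2 / 3 + 1 / (2 * ε)) * L / n) := by
  have hn' : (0 : ℝ) < n := by exact_mod_cast hn
  have hq' : 0 ≤ q * (1 - q) := mul_nonneg hq.1 (by linarith [hq.2])
  have hr : 0 ≤ r := (abs_nonneg _).trans hqp
  have hvar : p * (1 - p) ≤ q * (1 - q) + r :=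
    (mul_one_sub_le_add_abs_sub hp hq).trans (by rw [abs_sub_comm]; linarith)
  have hsqrt : √(2 * L * (n * (q * (1 - q)))) = n * √(2 * q * (1 - q) * L / n) := by
    rw [show 2 * L * (n * (q * (1 - q))) = n ^ 2 * (2 * q * (1 - q) * L / n) by field_simp,
      sqrt_mul (by positivity), sqrt_sq hn'.le]
  calc 2 / 3 * L + √(2 * L * V)
      ≤ 2 / 3 * L + √(2 * L * (n * (q * (1 - q))) + n * r * (2 * L)) := by
        gcongr
        nlinarith [mul_le_mul_of_nonneg_left hvar (by positivity : (0 : ℝ) ≤ 2 * L * n)]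
    _ ≤ 2 / 3 * L + (√(2 * L * (n * (q * (1 - q)))) + √(n * r * (2 * L))) := by
        gcongr; exact sqrt_add_le_sqrt_add_sqrt (by positivity) (by positivity)
    _ ≤ 2 / 3 * L + (n * √(2 * q * (1 - q) * L / n) + (ε * (n * r) + 2 * L / (4 * ε))) := by
        rw [hsqrt]; gcongr; exact sqrt_mul_le_mul_add_div (by positivity) (by positivity) hε
    _ = n * (ε * r + √(2 * q * (1 - q) * L / n) + (2 / 3 + 1 / (2 * ε)) * L / n) := by
        field_simp; ring

theorem stmt7_general {Ω : Type*} [MeasurableSpace Ω] (μ : Measure Ω) [IsProbabilityMeasure μ]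
    {n : ℕ} (hn : 0 < n) (x : Fin n → Ω → ℝ)
    (hmeas : ∀ i, Measurable (x i))
    (hBer : ∀ i, ∀ ω, x i ω = 0 ∨ x i ω = 1)
    (hind : iIndepFun x μ)
    (p : Fin n → ℝ) (hp : ∀ i, p i = ∫ ω, x i ω ∂μ)
    (q r ε δ : ℝ) (hq : q ∈ Set.Icc (0 : ℝ) 1) (hε : 0 < ε)
    (hδ : δ ∈ Set.Ioo (0 : ℝ) 1)
    (hqp : |q - (∑ i, p i) / n| ≤ r) :
    1 - δ ≤ (μ {ω | (∑ i, p i) / n - (∑ i, x i ω) / n <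
        ε * r + Real.sqrt (2 * q * (1 - q) * Real.log (1 / δ) / n) +
        (2 / 3 + 1 / (2 * ε)) * Real.log (1 / δ) / n}).toReal := by
  obtain rfl : p = fun i ↦ ∫ ω, x i ω ∂μ := funext hp
  have hn' : (0 : ℝ) < n := by exact_mod_cast hn
  have hL : 0 < log (1 / δ) := log_pos (one_lt_one_div hδ.1 hδ.2)
  set B := ε * r + √(2 * q * (1 - q) * log (1 / δ) / n) + (2 / 3 + 1 / (2 * ε)) * log (1 / δ) / n
  have hmean (i : Fin n) := integral_mem_Icc_of_bernoulli (μ := μ) (hmeas i) (hBer i)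
  have hpbar : (∑ i, ∫ ω, x i ω ∂μ) / n ∈ Set.Icc (0 : ℝ) 1 :=
    ⟨div_nonneg (sum_nonneg fun i _ ↦ (hmean i).1) hn'.le,
      (div_le_one hn').2 ((sum_le_sum fun i _ ↦ (hmean i).2).trans_eq (by simp))⟩
  have hV := sum_mul_one_sub_le_card_mul fun i ↦ ∫ ω, x i ω ∂μ
  rw [Fintype.card_fin] at hV
  have htail := measureReal_sum_le_sub_le_exp_neg_of_bernoulli hmeas hBer hind hL
    (two_div_three_mul_add_sqrt_le hn hL.le hε hpbar hq hqp hV)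
  have hδ' : exp (-log (1 / δ)) = δ := by
    rw [exp_neg, exp_log (one_div_pos.2 hδ.1), one_div, inv_inv]
  have hevent : {ω | (∑ i, ∫ ω, x i ω ∂μ) / n - (∑ i, x i ω) / n < B} =
      {ω | ∑ i, x i ω ≤ ∑ i, ∫ ω, x i ω ∂μ - n * B}ᶜ := by
    ext ω
    simp only [Set.mem_ofPred_eq, Set.mem_compl_iff, not_le, ← sub_div, div_lt_iff₀ hn']
    constructor <;> intro h <;> linarith
  rw [← measureReal_def, hevent,
    probReal_compl_eq_one_sub (measurableSet_le (by fun_prop) (by fun_prop))]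
  linarith [htail.trans_eq hδ']

/-- Bernstein's bound with perturbation (lower deviation): for independent Bernoulli
variables with means `pᵢ`, average mean `p̄`, and `q ∈ [0,1]` with `|q - p̄| ≤ r`,
with probability at least `1 - δ`,
`p̄ - (1/n)∑xᵢ < εr + √(2q(1-q)log(1/δ)/n) + (2/3 + 1/(2ε))·log(1/δ)/n`. -/
theorem stmt7 {Ω : Type*} [MeasurableSpace Ω] (μ : Measure Ω) [IsProbabilityMeasure μ]
    {n : ℕ} (hn : 0 < n) (x : Fin n → Ω → ℝ)
    (hmeas : ∀ i, Measurable (x i))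
    (hBer : ∀ i, ∀ ω, x i ω = 0 ∨ x i ω = 1)
    (hind : iIndepFun x μ)
    (p : Fin n → ℝ) (hp : ∀ i, p i = ∫ ω, x i ω ∂μ)
    (q r ε δ : ℝ) (hq : q ∈ Set.Icc (0 : ℝ) 1) (hr : 0 < r) (hε : 0 < ε)
    (hδ : δ ∈ Set.Ioo (0 : ℝ) 1)
    (hqp : |q - (∑ i, p i) / n| ≤ r) :
    1 - δ ≤ (μ {ω | (∑ i, p i) / n - (∑ i, x i ω) / n <
        ε * r + Real.sqrt (2 * q * (1 - q) * Real.log (1 / δ) / n) +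
        (2 / 3 + 1 / (2 * ε)) * Real.log (1 / δ) / n}).toReal :=
  stmt7_general μ hn x hmeas hBer hind p hp q r ε δ hq hε hδ hqp
end

section
/- Let x_1,...,x_n be i.i.d. Uniform(0,1) random variables and γ, δ ∈ (0,1), γ' ∈ (0,1). Then with probability at least 1 − δ, γ minus the left γ-quantile of the empirical distribution (1/n)∑δ_{x_i} is at most min over ε ∈ (0,1) of (1−ε)^{-1}[ε|γ−γ'| + √(2γ'(1−γ')log(1/δ)/n) + (2/3 + 1/(2ε))·log(1/δ)/n]. -/
open MeasureTheory ProbabilityTheory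

/-!
For a threshold `r`, the event `γ ≤ ecdf r` says that at least `n γ` of the indicators
`1(xᵢ ≤ r)`, independent Bernoulli(`r`) variables, equal one, and `Qminus γ < γ - t` forces this
event for some `r < γ - t`. For `r = γ - s`, Bernstein's inequality bounds its probability by
`exp (-n s² / (2 (r (1 - r) + s / 3)))`, which is at most `δ` as soon as
`s ≥ √(2 r (1 - r) log (1/δ) / n) + 2 log (1/δ) / (3 n)`. The unknown variance `r (1 - r)` is
within `|γ - γ'| + s` of `γ' (1 - γ')`, and AM-GM with weight `ε` turns this into an implicit
bound on `s` whose solution is the radius at `ε`. Continuity of `μ` from below passes from each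
fixed `ε` to the infimum over `ε`.
-/

open Real

lemma nonneg_of_hasDerivAt_of_nonneg {f f' : ℝ → ℝ} (hf : ∀ x, HasDerivAt f (f' x) x)
    (h0 : f 0 = 0) (hf' : ∀ x, 0 ≤ x → 0 ≤ f' x) {y : ℝ} (hy : 0 ≤ y) : 0 ≤ f y := by
  have hmono : MonotoneOn f (Set.Ici 0) :=
    monotoneOn_of_hasDerivWithinAt_nonneg (convex_Ici 0)
      (fun x _ => (hf x).continuousAt.continuousWithinAt) (fun x _ => (hf x).hasDerivWithinAt)
      (fun x hx => hf' x (interior_subset hx))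
  simpa [h0] using hmono Set.self_mem_Ici hy hy

/-- `1 + p (exp l - 1)` is the moment generating function of a Bernoulli(`p`) variable; the
exponent on the right is `p l` plus Bennett's bound for the centred variable. -/
lemma one_add_mul_exp_sub_one_le_exp {p l : ℝ} (hp0 : 0 ≤ p) (hp1 : p ≤ 1) (hl : 0 ≤ l) :
    1 + p * (exp l - 1) ≤ exp (p * l + p * (1 - p) * (exp l - 1 - l)) := by
  have hD : ∀ x, 0 < 1 + p * (exp x - 1) := fun x => by
    nlinarith [exp_pos x, mul_nonneg hp0 (exp_pos x).le]
  have hderiv : ∀ x, HasDerivAt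
      (fun x => p * x + p * (1 - p) * (exp x - 1 - x) - log (1 + p * (exp x - 1)))
      (p * (1 - p) * (p * (exp x - 1) ^ 2) / (1 + p * (exp x - 1))) x := fun x => by
    have h := (((hasDerivAt_id x).const_mul p).add
      ((((hasDerivAt_exp x).sub_const 1).sub (hasDerivAt_id x)).const_mul (p * (1 - p)))).sub
      (((((hasDerivAt_exp x).sub_const 1).const_mul p).const_add 1).log (hD x).ne')
    refine h.congr_deriv ?_
    field_simp [(hD x).ne']
    ring
  have key := nonneg_of_hasDerivAt_of_nonneg hderiv (by simp)
    (fun x _ => div_nonneg (by have := mul_nonneg hp0 (sub_nonneg.2 hp1); positivity)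
      (hD x).le) hl
  calc 1 + p * (exp l - 1) = exp (log (1 + p * (exp l - 1))) := (exp_log (hD l)).symm
    _ ≤ _ := exp_le_exp.2 (by linarith)

/-- For `l < 3` this is `exp l - 1 - l ≤ l ^ 2 / (2 * (1 - l / 3))`, the term-wise comparison
`k! ≥ 2 * 3 ^ (k - 2)` of the exponential series. -/
lemma three_sub_mul_exp_sub_one_sub_le {l : ℝ} (hl : 0 ≤ l) :
    (3 - l) * (exp l - 1 - l) ≤ 3 * l ^ 2 / 2 := by
  have h₁ : ∀ y, 0 ≤ y → 0 ≤ 1 + (y - 1) * exp y := fun y hy =>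
    nonneg_of_hasDerivAt_of_nonneg (f' := fun x => x * exp x)
      (fun x => (((hasDerivAt_id x).sub_const 1).mul (hasDerivAt_exp x)).const_add 1
        |>.congr_deriv (by simp; ring))
      (by simp) (fun x hx => by positivity) hy
  have h₂ : ∀ y, 0 ≤ y → 0 ≤ y + 2 + (y - 2) * exp y := fun y hy =>
    nonneg_of_hasDerivAt_of_nonneg
      (fun x => (((hasDerivAt_id x).add_const 2).add
        (((hasDerivAt_id x).sub_const 2).mul (hasDerivAt_exp x))).congr_deriv
          (show _ = 1 + (x - 1) * exp x by simp; ring))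
      (by simp) h₁ hy
  have h₃ := nonneg_of_hasDerivAt_of_nonneg
    (f := fun x => 3 * x ^ 2 / 2 - (3 - x) * (exp x - 1 - x))
    (fun x => ((((hasDerivAt_pow 2 x).const_mul 3).div_const 2).sub
      (((hasDerivAt_const x 3).sub (hasDerivAt_id x)).mul
        (((hasDerivAt_exp x).sub_const 1).sub (hasDerivAt_id x)))).congr_deriv
          (show _ = x + 2 + (x - 2) * exp x by simp; ring))
    (by simp) h₂ hl
  linarith

/-- The exponent of the Chernoff bound at the Bernstein choice `l = s / (v + s / 3)`. -/
lemma bernstein_exponent_le {v s : ℝ} (hv : 0 ≤ v) (hs : 0 < s) :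
    -(s / (v + s / 3)) * s + v * (exp (s / (v + s / 3)) - 1 - s / (v + s / 3)) ≤
      -s ^ 2 / (2 * (v + s / 3)) := by
  set w := v + s / 3
  set l := s / w
  have hw : 0 < w := by positivity
  have hvw : v = w / 3 * (3 - l) := by simp only [l, w]; field_simp; ring
  have hexp := three_sub_mul_exp_sub_one_sub_le (l := l) (by positivity)
  calc -l * s + v * (exp l - 1 - l) = -l * s + w / 3 * ((3 - l) * (exp l - 1 - l)) := by
        rw [hvw]; ring
    _ ≤ -l * s + w / 3 * (3 * l ^ 2 / 2) := by gcongr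
    _ = -s ^ 2 / (2 * w) := by simp only [l]; field_simp; ring

theorem measure_sum_ge_le_of_bernoulli {Ω ι : Type*} [MeasurableSpace Ω] {μ : Measure Ω}
    [IsProbabilityMeasure μ] [Fintype ι] {Y : ι → Ω → ℝ} (hmeas : ∀ i, Measurable (Y i))
    (hind : iIndepFun Y μ) (hY : ∀ i ω, Y i ω = 0 ∨ Y i ω = 1) {p s : ℝ}
    (hp : ∀ i, μ[Y i] = p) (hp0 : 0 ≤ p) (hp1 : p ≤ 1) (hs : 0 < s) :
    μ.real {ω | Fintype.card ι * (p + s) ≤ ∑ i, Y i ω} ≤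
      exp (-(Fintype.card ι * s ^ 2) / (2 * (p * (1 - p) + s / 3))) := by
  set N : ℝ := (Fintype.card ι : ℝ)
  set l := s / (p * (1 - p) + s / 3)
  have hl : 0 ≤ l := by have := mul_nonneg hp0 (sub_nonneg.2 hp1); positivity
  have hY01 : ∀ i ω, 0 ≤ Y i ω ∧ Y i ω ≤ 1 := fun i ω => by rcases hY i ω with h | h <;> simp [h]
  have hmgf : ∀ i, mgf (Y i) μ l = 1 + p * (exp l - 1) := fun i => by
    have hpt : (fun ω => exp (l * Y i ω)) = fun ω => 1 + (exp l - 1) * Y i ω := by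
      ext ω; rcases hY i ω with h | h <;> simp [h]
    have hint : Integrable (Y i) μ := .of_bound (hmeas i).aestronglyMeasurable 1
      (ae_of_all _ fun ω => by rw [norm_eq_abs, abs_le]; constructor <;> linarith [hY01 i ω])
    rw [mgf, hpt, integral_add (integrable_const _) (hint.const_mul _), integral_const_mul, hp,
      integral_const, probReal_univ, smul_eq_mul, mul_one, mul_comm]
  have hint : Integrable (fun ω => exp (l * (∑ i, Y i) ω)) μ :=
    .of_bound (by fun_prop) (exp (l * N)) (ae_of_all _ fun ω => by
      rw [norm_of_nonneg (exp_pos _).le, exp_le_exp]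
      refine mul_le_mul_of_nonneg_left ?_ hl
      simpa [N] using Finset.sum_le_sum fun i (_ : i ∈ Finset.univ) => (hY01 i ω).2)
  have hchernoff := measure_ge_le_exp_mul_mgf (N * (p + s)) hl hint
  rw [hind.mgf_sum hmeas, Finset.prod_congr rfl fun i _ => hmgf i, Finset.prod_const,
    Finset.card_univ] at hchernoff
  simp only [Finset.sum_apply] at hchernoff
  refine hchernoff.trans ?_
  calc exp (-l * (N * (p + s))) * (1 + p * (exp l - 1)) ^ Fintype.card ι
      ≤ exp (-l * (N * (p + s))) *
          exp (p * l + p * (1 - p) * (exp l - 1 - l)) ^ Fintype.card ι := by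
        gcongr
        · nlinarith [add_one_le_exp l]
        · exact one_add_mul_exp_sub_one_le_exp hp0 hp1 hl
    _ = exp (N * (-l * s + p * (1 - p) * (exp l - 1 - l))) := by
        rw [← exp_nat_mul, ← exp_add]; simp only [N]; ring_nf
    _ ≤ exp (N * (-s ^ 2 / (2 * (p * (1 - p) + s / 3)))) := by
        gcongr
        exact bernstein_exponent_le (mul_nonneg hp0 (sub_nonneg.2 hp1)) hs
    _ = _ := by ring_nf

lemma mul_one_sub_le_add_abs_sub_s9 {a b : ℝ} (ha0 : 0 ≤ a) (ha1 : a ≤ 1) (hb0 : 0 ≤ b)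
    (hb1 : b ≤ 1) : a * (1 - a) ≤ b * (1 - b) + |a - b| := by
  have h : |1 - a - b| ≤ 1 := abs_le.2 ⟨by linarith, by linarith⟩
  calc a * (1 - a) = b * (1 - b) + (a - b) * (1 - a - b) := by ring
    _ ≤ b * (1 - b) + |a - b| * |1 - a - b| := by
        rw [← abs_mul]; gcongr; exact le_abs_self _
    _ ≤ b * (1 - b) + |a - b| := by
        gcongr; exact mul_le_of_le_one_right (abs_nonneg _) h

lemma sqrt_two_mul_mul_le {a r ε : ℝ} (ha : 0 ≤ a) (hr : 0 ≤ r) (hε : 0 < ε) :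
    √(2 * a * r) ≤ ε * a + r / (2 * ε) := by
  rw [sqrt_le_iff]
  refine ⟨by positivity, ?_⟩
  have hεr : ε * a * (r / (2 * ε)) = a * r / 2 := by field_simp
  nlinarith [sq_nonneg (ε * a - r / (2 * ε))]

lemma sqrt_add_le_add_sqrt {a b : ℝ} (ha : 0 ≤ a) (hb : 0 ≤ b) : √(a + b) ≤ √a + √b := by
  simpa only [sqrt_eq_rpow] using rpow_add_le_add_rpow ha hb (by norm_num) (by norm_num)

lemma two_mul_add_div_three_mul_le_sq {v r s : ℝ} (hv : 0 ≤ v) (hr : 0 ≤ r)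
    (hs : √(2 * v * r) + 2 / 3 * r ≤ s) : 2 * (v + s / 3) * r ≤ s ^ 2 := by
  have ha := sq_sqrt (by positivity : 0 ≤ 2 * v * r)
  nlinarith [sqrt_nonneg (2 * v * r)]

/-- The perturbation step: the variance `v` of the true Bernoulli parameter is only known to be
within `A + s` of the proxy variance `v₀`, and the excess `√(2 (A + s) r)` is absorbed by AM-GM
into the `ε`-terms of the radius. -/
lemma sqrt_two_mul_add_le_of_perturbation {v v₀ A s r ε : ℝ} (hv₀ : 0 ≤ v₀) (hA : 0 ≤ A)
    (hs0 : 0 ≤ s) (hr : 0 ≤ r) (hε : 0 < ε) (hv : v ≤ v₀ + (A + s))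
    (hs : (1 - ε) * s = ε * A + √(2 * v₀ * r) + (2 / 3 + 1 / (2 * ε)) * r) :
    √(2 * v * r) + 2 / 3 * r ≤ s := by
  have hsplit : √(2 * v * r) ≤ √(2 * v₀ * r) + √(2 * (A + s) * r) :=
    calc √(2 * v * r) ≤ √(2 * v₀ * r + 2 * (A + s) * r) := sqrt_le_sqrt (by nlinarith)
      _ ≤ _ := sqrt_add_le_add_sqrt (by positivity) (by positivity)
  have hamgm := sqrt_two_mul_mul_le (add_nonneg hA hs0) hr hε
  have hr' : (2 / 3 + 1 / (2 * ε)) * r = 2 / 3 * r + r / (2 * ε) := by field_simp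
  linarith

lemma measure_preimage_Iic_of_map_eq_uniform {Ω : Type*} [MeasurableSpace Ω] {μ : Measure Ω}
    {X : Ω → ℝ} (hX : Measurable X) (hunif : μ.map X = volume.restrict (Set.Ioo 0 1)) (c : ℝ) :
    μ (X ⁻¹' Set.Iic c) = volume (Set.Iic c ∩ Set.Ioo 0 1) := by
  rw [← Measure.map_apply hX measurableSet_Iic, hunif, Measure.restrict_apply measurableSet_Iic]

lemma ecdf_mono {n : ℕ} (x : Fin n → ℝ) : Monotone (ecdf x) := fun t t' h => by
  unfold ecdf
  gcongr

lemma ecdf_eq_one {n : ℕ} (hn : 0 < n) {x : Fin n → ℝ} {t : ℝ} (ht : ∀ i, x i ≤ t) :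
    ecdf x t = 1 := by
  simp [ecdf, ht, hn.ne']

lemma exists_lt_le_ecdf_of_Qminus_lt {n : ℕ} (hn : 0 < n) (x : Fin n → ℝ) {γ a : ℝ}
    (hγ : γ ≤ 1) (h : Qminus γ (ecdf x) < a) : ∃ r < a, γ ≤ ecdf x r := by
  obtain ⟨M, hM⟩ := (Set.finite_range x).bddAbove
  have hne : {r | γ ≤ ecdf x r}.Nonempty :=
    ⟨M, by simpa [ecdf_eq_one hn fun i => hM (Set.mem_range_self i)] using hγ⟩
  obtain ⟨r, hr, hra⟩ := exists_lt_of_csInf_lt hne h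
  exact ⟨r, hra, hr⟩

noncomputable def quantileRadius (n : ℕ) (γ γ' δ ε : ℝ) : ℝ :=
  (1 - ε)⁻¹ * (ε * |γ - γ'| + √(2 * γ' * (1 - γ') * log (1 / δ) / n) +
    (2 / 3 + 1 / (2 * ε)) * log (1 / δ) / n)

section UniformSample

variable {Ω : Type*} [MeasurableSpace Ω] {μ : Measure Ω} {n : ℕ} {x : Fin n → Ω → ℝ}

lemma measure_ecdf_pos_eq_zero (hmeas : ∀ i, Measurable (x i))
    (hunif : ∀ i, μ.map (x i) = volume.restrict (Set.Ioo 0 1)) {c : ℝ} (hc : c ≤ 0) :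
    μ {ω | 0 < ecdf (fun i => x i ω) c} = 0 := by
  refine measure_mono_null (t := ⋃ i, x i ⁻¹' Set.Iic c) (fun ω hω => ?_) <|
    measure_iUnion_null fun i => ?_
  · simp only [Set.mem_iUnion, Set.mem_preimage, Set.mem_Iic]
    by_contra! h
    have hempty : Finset.univ.filter (fun i => x i ω ≤ c) = ∅ :=
      Finset.filter_eq_empty_iff.2 fun i _ => not_le.2 (h i)
    simp [ecdf, hempty] at hω
  · rw [measure_preimage_Iic_of_map_eq_uniform (hmeas i) (hunif i)]
    convert measure_empty (μ := volume)
    ext y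
    simp only [Set.mem_inter_iff, Set.mem_Iic, Set.mem_Ioo, Set.mem_empty_iff_false, iff_false]
    intro h
    linarith

lemma measure_ecdf_ge_le_bernstein [IsProbabilityMeasure μ] (hn : 0 < n)
    (hmeas : ∀ i, Measurable (x i)) (hind : iIndepFun x μ)
    (hunif : ∀ i, μ.map (x i) = volume.restrict (Set.Ioo 0 1))
    {c s : ℝ} (hc0 : 0 ≤ c) (hc1 : c < 1) (hs : 0 < s) :
    μ {ω | c + s ≤ ecdf (fun i => x i ω) c} ≤
      ENNReal.ofReal (exp (-(n * s ^ 2) / (2 * (c * (1 - c) + s / 3)))) := by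
  set Y : Fin n → Ω → ℝ := fun i => (x i ⁻¹' Set.Iic c).indicator 1
  have hYmeas : ∀ i, Measurable (Y i) := fun i =>
    measurable_const.indicator (hmeas i measurableSet_Iic)
  have hYind : iIndepFun Y μ :=
    hind.comp (fun _ => (Set.Iic c).indicator 1)
      (fun _ => measurable_const.indicator measurableSet_Iic)
  have hY : ∀ i ω, Y i ω = 0 ∨ Y i ω = 1 := fun i ω => by
    by_cases h : x i ω ≤ c <;> simp [Y, h]
  have hmean : ∀ i, μ[Y i] = c := fun i => by
    rw [integral_indicator_one (hmeas i measurableSet_Iic), measureReal_def,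
      measure_preimage_Iic_of_map_eq_uniform (hmeas i) (hunif i)]
    have : Set.Iic c ∩ Set.Ioo 0 1 = Set.Ioc 0 c := by
      ext y
      simp only [Set.mem_inter_iff, Set.mem_Iic, Set.mem_Ioo, Set.mem_Ioc]
      exact ⟨fun ⟨h, h0, _⟩ => ⟨h0, h⟩, fun ⟨h0, h⟩ => ⟨h, h0, h.trans_lt hc1⟩⟩
    simp [this, hc0]
  have hevent : {ω | c + s ≤ ecdf (fun i => x i ω) c} =
      {ω | (Fintype.card (Fin n) : ℝ) * (c + s) ≤ ∑ i, Y i ω} := by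
    ext ω
    have hsum : ∑ i, Y i ω = (Finset.univ.filter fun i => x i ω ≤ c).card := by
      rw [Finset.natCast_card_filter]
      rfl
    simp only [Set.mem_ofPred_eq, ecdf, hsum, le_div_iff₀ (by positivity : (0 : ℝ) < n),
      Fintype.card_fin, mul_comm]
  rw [hevent, ← ofReal_measureReal (measure_ne_top _ _)]
  gcongr
  simpa using measure_sum_ge_le_of_bernoulli hYmeas hYind hY hmean hc0 hc1.le hs

lemma measure_le_ecdf_sub_quantileRadius_le [IsProbabilityMeasure μ] (hn : 0 < n)
    (hmeas : ∀ i, Measurable (x i)) (hind : iIndepFun x μ)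
    (hunif : ∀ i, μ.map (x i) = volume.restrict (Set.Ioo 0 1))
    {γ γ' δ ε : ℝ} (hγ : γ ∈ Set.Ioo (0 : ℝ) 1) (hγ' : γ' ∈ Set.Ioo (0 : ℝ) 1)
    (hδ : δ ∈ Set.Ioo (0 : ℝ) 1) (hε : ε ∈ Set.Ioo (0 : ℝ) 1) :
    μ {ω | γ ≤ ecdf (fun i => x i ω) (γ - quantileRadius n γ γ' δ ε)} ≤ ENNReal.ofReal δ := by
  obtain ⟨hγ0, hγ1⟩ := hγ
  obtain ⟨hγ'0, hγ'1⟩ := hγ'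
  obtain ⟨hε0, hε1⟩ := hε
  set s := quantileRadius n γ γ' δ ε
  set c := γ - s
  set r := log (1 / δ) / n
  have hL : 0 < log (1 / δ) := log_pos (one_lt_one_div hδ.1 hδ.2)
  have hr : 0 < r := div_pos hL (by exact_mod_cast hn)
  have hs0 : 0 < s := by
    have h1ε : 0 < 1 - ε := by linarith
    have := mul_nonneg hε0.le (abs_nonneg (γ - γ'))
    simp only [s, quantileRadius]
    positivity
  rcases le_or_gt c 0 with hc | hc
  · exact (measure_mono_null (fun ω (hω : γ ≤ _) => hγ0.trans_le hω)
      (measure_ecdf_pos_eq_zero hmeas hunif hc)).trans_le zero_le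
  have hs : (1 - ε) * s =
      ε * |γ - γ'| + √(2 * (γ' * (1 - γ')) * r) + (2 / 3 + 1 / (2 * ε)) * r := by
    simp only [s, r, quantileRadius]
    rw [mul_inv_cancel_left₀ (by linarith)]
    ring_nf
  have hv : c * (1 - c) ≤ γ' * (1 - γ') + (|γ - γ'| + s) :=
    (mul_one_sub_le_add_abs_sub_s9 hc.le (by linarith) hγ'0.le hγ'1.le).trans <| by
      gcongr; exact (abs_sub_le c γ γ').trans (by simp [c, abs_of_pos hs0, add_comm])
  have hrad := two_mul_add_div_three_mul_le_sq (mul_nonneg hc.le (by linarith)) hr.le <|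
    sqrt_two_mul_add_le_of_perturbation (by nlinarith) (abs_nonneg _) hs0.le hr.le hε0 hv hs
  calc μ {ω | γ ≤ ecdf (fun i => x i ω) c}
      = μ {ω | c + s ≤ ecdf (fun i => x i ω) c} := by simp [c]
    _ ≤ ENNReal.ofReal (exp (-(n * s ^ 2) / (2 * (c * (1 - c) + s / 3)))) :=
        measure_ecdf_ge_le_bernstein hn hmeas hind hunif hc.le (by linarith) hs0
    _ ≤ ENNReal.ofReal δ := by
        gcongr
        calc exp (-(n * s ^ 2) / (2 * (c * (1 - c) + s / 3))) ≤ exp (-log (1 / δ)) := by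
              gcongr
              rw [div_le_iff₀ (by nlinarith), neg_mul, neg_le_neg_iff]
              calc log (1 / δ) * (2 * (c * (1 - c) + s / 3))
                  = n * (2 * (c * (1 - c) + s / 3) * r) := by
                    simp only [r]; field_simp
                _ ≤ n * s ^ 2 := by gcongr
          _ = δ := by rw [one_div, log_inv, neg_neg, exp_log hδ.1]

end UniformSample

lemma measure_iUnion_Iio_le {Ω : Type*} [MeasurableSpace Ω] {μ : Measure Ω} {E : ℝ → Set Ω}
    (hE : Monotone E) {a : ℝ} {m : ENNReal} (h : ∀ r < a, μ (E r) ≤ m) :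
    μ (⋃ r : Set.Iio a, E r) ≤ m :=
  (hE.comp (Subtype.mono_coe _)).measure_iUnion.trans_le (iSup_le fun r => h r r.2)

lemma one_sub_le_toReal_measure_of_measure_compl_le {Ω : Type*} [MeasurableSpace Ω]
    {μ : Measure Ω} [IsProbabilityMeasure μ] {s : Set Ω} {δ : ℝ} (hδ : 0 ≤ δ)
    (h : μ sᶜ ≤ ENNReal.ofReal δ) : 1 - δ ≤ (μ s).toReal := by
  have h1 : 1 ≤ ENNReal.ofReal δ + μ s :=
    calc 1 = μ Set.univ := measure_univ.symm
      _ ≤ μ sᶜ + μ sᶜᶜ := measure_univ_le_add_compl _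
      _ ≤ ENNReal.ofReal δ + μ s := by rw [compl_compl]; gcongr
  have := ENNReal.toReal_mono (by finiteness) h1
  rw [ENNReal.toReal_one, ENNReal.toReal_add (by simp) (measure_ne_top _ _),
    ENNReal.toReal_ofReal hδ] at this
  linarith

/-- Concentration of the empirical left quantile with perturbation: for i.i.d.
`Uniform(0,1)` samples, with probability at least `1 - δ`, the left `γ`-quantile of the
empirical distribution falls below `γ` by at most
`min_{ε ∈ (0,1)} (1-ε)⁻¹ [ε|γ-γ'| + √(2γ'(1-γ')log(1/δ)/n) + (2/3 + 1/(2ε))·log(1/δ)/n]`. -/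
theorem stmt9 {Ω : Type*} [MeasurableSpace Ω] (μ : Measure Ω) [IsProbabilityMeasure μ]
    {n : ℕ} (hn : 0 < n) (x : Fin n → Ω → ℝ)
    (hmeas : ∀ i, Measurable (x i))
    (hind : iIndepFun x μ)
    (hunif : ∀ i, Measure.map (x i) μ = volume.restrict (Set.Ioo (0 : ℝ) 1))
    (γ γ' δ : ℝ) (hγ : γ ∈ Set.Ioo (0 : ℝ) 1) (hγ' : γ' ∈ Set.Ioo (0 : ℝ) 1)
    (hδ : δ ∈ Set.Ioo (0 : ℝ) 1) :
    1 - δ ≤ (μ {ω | γ - Qminus γ (ecdf (fun i => x i ω)) ≤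
        sInf ((fun ε : ℝ => (1 - ε)⁻¹ *
          (ε * |γ - γ'| + Real.sqrt (2 * γ' * (1 - γ') * Real.log (1 / δ) / n) +
            (2 / 3 + 1 / (2 * ε)) * Real.log (1 / δ) / n)) '' Set.Ioo (0 : ℝ) 1)}).toReal := by
  change 1 - δ ≤ (μ {ω | γ - Qminus γ (ecdf (fun i => x i ω)) ≤
    sInf (quantileRadius n γ γ' δ '' Set.Ioo 0 1)}).toReal
  set t := sInf (quantileRadius n γ γ' δ '' Set.Ioo 0 1)
  have hne : (quantileRadius n γ γ' δ '' Set.Ioo 0 1).Nonempty :=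
    (Set.nonempty_Ioo.2 zero_lt_one).image _
  refine one_sub_le_toReal_measure_of_measure_compl_le hδ.1.le <| (measure_mono ?_).trans <|
    measure_iUnion_Iio_le (a := γ - t) (E := fun r => {ω | γ ≤ ecdf (fun i => x i ω) r})
      (fun r r' h ω hω => hω.trans (ecdf_mono _ h)) fun r hr => ?_
  · intro ω hω
    obtain ⟨r, hr, hγr⟩ := exists_lt_le_ecdf_of_Qminus_lt hn _ hγ.2.le
      (show Qminus γ _ < γ - t by
        simp only [Set.mem_compl_iff, Set.mem_ofPred_eq, not_le] at hω; linarith)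
    exact Set.mem_iUnion.2 ⟨⟨r, hr⟩, hγr⟩
  · obtain ⟨_, ⟨ε, hε, rfl⟩, hlt⟩ := exists_lt_of_csInf_lt hne (show t < γ - r by linarith)
    exact (measure_mono fun ω (hω : γ ≤ _) => hω.trans (ecdf_mono _ (by linarith))).trans
      (measure_le_ecdf_sub_quantileRadius_le hn hmeas hind hunif hγ hγ' hδ hε)
end

section
/- Let x_1,...,x_n be independent real random variables with continuous CDFs F_1,...,F_n, let F̂ be their empirical CDF, and let φ = max_i ‖F_i − F_n‖_∞. For any γ, δ ∈ (0,1) and ε ∈ (0,1), with probability at least 1 − δ: F_n(Q⁺_γ(F̂)) − γ ≤ φ + (1−ε)^{-1}[√(2γ(1−γ)log(1/δ)/n) + (2/3 + 1/(2ε))·log(1/δ)/n]. -/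
open MeasureTheory ProbabilityTheory

noncomputable def Qplus (γ : ℝ) (F : ℝ → ℝ) : ℝ := sInf {x | γ < F x}

/-! Put `B` for the deviation term and `τ = γ + φ + B`; if `τ ≥ 1` there is nothing to prove.
Otherwise continuity of `Fₙ` gives `s` with `Fₙ(s) = τ`, and `Fₙ(Q⁺_γ(F̂)) > τ` forces
`Q⁺_γ(F̂) > s`, i.e. `F̂(s) ≤ γ`: at most `nγ` of the independent events `{xᵢ ≤ s}` occur,
although each has probability `Fᵢ(s) ≥ τ - φ = γ + B`. The Chernoff bound makes this
`≤ exp (-n KL(γ ‖ γ + B))`, and the Bernstein-type estimate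
`KL(γ ‖ γ + a) ≥ a² / (2 (γ(1-γ) + a))` together with the choice of `B` gives `≤ δ`. -/

open Real

noncomputable def bernoulliKL (q p : ℝ) : ℝ :=
  q * log (q / p) + (1 - q) * log ((1 - q) / (1 - p))

lemma hasDerivAt_bernoulliKL_sub_sq_div {γ v p : ℝ} (hγ0 : 0 < γ) (hγ1 : γ < 1)
    (hp0 : 0 < p) (hp1 : p < 1) (hvp : 0 < v + (p - γ)) :
    HasDerivAt (fun p => bernoulliKL γ p - (p - γ) ^ 2 / (2 * (v + (p - γ))))
      ((p - γ) / (p * (1 - p)) - (p - γ) * (2 * v + (p - γ)) / (2 * (v + (p - γ)) ^ 2)) p := by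
  have h1p : (0 : ℝ) < 1 - p := by linarith
  have h1γ : (0 : ℝ) < 1 - γ := by linarith
  have h₁ : HasDerivAt (fun p => γ / p) (-(γ / p ^ 2)) p := by
    simpa [div_eq_mul_inv] using (hasDerivAt_inv hp0.ne').const_mul γ
  have h₂ : HasDerivAt (fun p => (1 - γ) / (1 - p)) ((1 - γ) / (1 - p) ^ 2) p := by
    simpa [div_eq_mul_inv] using
      ((hasDerivAt_inv h1p.ne').comp p ((hasDerivAt_id p).const_sub 1)).const_mul (1 - γ)
  have h₃ : HasDerivAt (fun p => (p - γ) ^ 2 / (2 * (v + (p - γ))))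
      ((2 * (p - γ) * (2 * (v + (p - γ))) - (p - γ) ^ 2 * 2) / (2 * (v + (p - γ))) ^ 2) p := by
    refine HasDerivAt.div ?_ ?_ (by positivity)
    · simpa using ((hasDerivAt_id p).sub_const γ).fun_pow 2
    · simpa using (((hasDerivAt_id p).sub_const γ).const_add v).const_mul 2
  unfold bernoulliKL
  refine ((((h₁.log (by positivity)).const_mul γ).add
    ((h₂.log (by positivity)).const_mul (1 - γ))).sub h₃).congr_deriv ?_
  field_simp
  ring

lemma sq_div_le_bernoulliKL_add {γ a : ℝ} (hγ0 : 0 < γ) (ha : 0 ≤ a) (h1 : γ + a < 1) :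
    a ^ 2 / (2 * (γ * (1 - γ) + a)) ≤ bernoulliKL γ (γ + a) := by
  set v := γ * (1 - γ)
  have hv : 0 < v := mul_pos hγ0 (by linarith)
  have hderiv := fun p (hp : p ∈ Set.Icc γ (γ + a)) =>
    hasDerivAt_bernoulliKL_sub_sq_div (v := v) (p := p) hγ0 (by linarith) (by linarith [hp.1])
      (by linarith [hp.2]) (by linarith [hp.1])
  have hmono : MonotoneOn (fun p => bernoulliKL γ p - (p - γ) ^ 2 / (2 * (v + (p - γ))))
      (Set.Icc γ (γ + a)) := by
    refine monotoneOn_of_hasDerivWithinAt_nonneg (convex_Icc _ _)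
      (fun p hp => (hderiv p hp).continuousAt.continuousWithinAt)
      (fun p hp => (hderiv p (interior_subset hp)).hasDerivWithinAt) fun p hp => ?_
    rw [interior_Icc] at hp
    obtain ⟨hγp, hpa⟩ := hp
    have hw : 0 ≤ p - γ := by linarith
    have hp0 : 0 < p * (1 - p) := mul_pos (by linarith) (by linarith)
    -- with `w = p - γ` the difference of the two sides is `w² (v (1 + 4γ) + 2vw + w (1 + 2γ) + w²)`
    rw [sub_nonneg, div_le_div_iff₀ (by positivity) hp0]
    nlinarith [mul_nonneg hw (mul_nonneg hw hw), mul_nonneg (mul_nonneg hw hw) hγ0.le,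
      mul_nonneg hw hv.le, mul_nonneg (mul_nonneg hw hv.le) hγ0.le,
      mul_nonneg (mul_nonneg hw hw) hv.le, mul_nonneg hw hw]
  have := hmono (Set.left_mem_Icc.2 (by linarith)) (Set.right_mem_Icc.2 (by linarith))
    (by linarith)
  simpa [bernoulliKL, div_self hγ0.ne', div_self (by linarith : (1 : ℝ) - γ ≠ 0)] using this

lemma two_mul_add_mul_le_sq {v ℓ ε B : ℝ} (hv : 0 ≤ v) (hℓ : 0 ≤ ℓ) (hε0 : 0 < ε) (hε1 : ε < 1)
    (hB : √(2 * v * ℓ) + ℓ / (2 * ε) ≤ (1 - ε) * B) :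
    2 * (v + B) * ℓ ≤ B ^ 2 := by
  have hB0 : 0 ≤ B := by
    nlinarith [Real.sqrt_nonneg (2 * v * ℓ), div_nonneg hℓ (by positivity : (0 : ℝ) ≤ 2 * ε)]
  -- AM-GM: `√(2 B ℓ) ≤ ε B + ℓ / (2 ε)`
  have hamgm : √(2 * B * ℓ) ≤ ε * B + ℓ / (2 * ε) := by
    refine Real.sqrt_le_iff.2 ⟨by positivity, ?_⟩
    have : ε * B * (ℓ / (2 * ε)) = B * ℓ / 2 := by field_simp
    nlinarith [sq_nonneg (ε * B - ℓ / (2 * ε))]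
  have hsum : √(2 * v * ℓ) + √(2 * B * ℓ) ≤ B := by linarith
  have h₁ := Real.sq_sqrt (by positivity : 0 ≤ 2 * v * ℓ)
  have h₂ := Real.sq_sqrt (by positivity : 0 ≤ 2 * B * ℓ)
  nlinarith [Real.sqrt_nonneg (2 * v * ℓ), Real.sqrt_nonneg (2 * B * ℓ),
    mul_nonneg (Real.sqrt_nonneg (2 * v * ℓ)) (Real.sqrt_nonneg (2 * B * ℓ))]

noncomputable def quantileDeviation (n : ℕ) (γ δ ε : ℝ) : ℝ :=
  (1 - ε)⁻¹ * (√(2 * γ * (1 - γ) * log (1 / δ) / n) + (2 / 3 + 1 / (2 * ε)) * log (1 / δ) / n)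

section QuantileDeviation

variable {n : ℕ} {γ δ ε : ℝ}

lemma quantileDeviation_nonneg (hδ0 : 0 < δ) (hδ1 : δ ≤ 1) (hε0 : 0 < ε) (hε1 : ε < 1) :
    0 ≤ quantileDeviation n γ δ ε := by
  have hlog : 0 ≤ log (1 / δ) := log_nonneg (by rw [le_div_iff₀ hδ0]; linarith)
  exact mul_nonneg (inv_nonneg.2 (by linarith)) (add_nonneg (sqrt_nonneg _)
    (div_nonneg (mul_nonneg (by positivity) hlog) n.cast_nonneg))

lemma exp_neg_mul_bernoulliKL_quantileDeviation_le (hn : 0 < n) (hγ0 : 0 < γ) (hδ0 : 0 < δ)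
    (hδ1 : δ ≤ 1) (hε0 : 0 < ε) (hε1 : ε < 1) (h1 : γ + quantileDeviation n γ δ ε < 1) :
    exp (-(n * bernoulliKL γ (γ + quantileDeviation n γ δ ε))) ≤ δ := by
  set B := quantileDeviation n γ δ ε with hB
  set ℓ := log (1 / δ) / n with hℓ
  have hℓ0 : 0 ≤ ℓ := div_nonneg (log_nonneg (by rw [le_div_iff₀ hδ0]; linarith)) n.cast_nonneg
  have hB0 : 0 ≤ B := quantileDeviation_nonneg hδ0 hδ1 hε0 hε1
  have hdev : √(2 * (γ * (1 - γ)) * ℓ) + ℓ / (2 * ε) ≤ (1 - ε) * B := by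
    have hsqrt : 2 * γ * (1 - γ) * log (1 / δ) / n = 2 * (γ * (1 - γ)) * ℓ := by
      rw [hℓ]; ring
    have hB' : (1 - ε) * B = √(2 * (γ * (1 - γ)) * ℓ) + 2 / 3 * ℓ + ℓ / (2 * ε) := by
      rw [hB, quantileDeviation, hsqrt, ← mul_assoc, mul_inv_cancel₀ (by linarith), one_mul, hℓ]
      field_simp
      ring
    rw [hB']; linarith
  have hKL : ℓ ≤ bernoulliKL γ (γ + B) := by
    refine le_trans ?_ (sq_div_le_bernoulliKL_add hγ0 hB0 h1)
    rw [le_div_iff₀ (by nlinarith), mul_comm]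
    exact two_mul_add_mul_le_sq (by nlinarith) hℓ0 hε0 hε1 hdev
  calc exp (-(n * bernoulliKL γ (γ + B))) ≤ exp (-(n * ℓ)) := by gcongr
    _ = δ := by
      rw [hℓ, mul_div_cancel₀ _ (Nat.cast_pos.2 hn).ne', one_div, log_inv, neg_neg, exp_log hδ0]

end QuantileDeviation

section Chernoff

variable {Ω ι : Type*} [MeasurableSpace Ω] {μ : Measure Ω} [IsProbabilityMeasure μ]

lemma mgf_indicator_one {A : Set Ω} (hA : MeasurableSet A) (t : ℝ) :
    mgf (A.indicator 1) μ t = 1 + μ.real A * (exp t - 1) := by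
  have hexp : (fun ω => exp (t * A.indicator 1 ω)) =
      fun ω => A.indicator (fun _ => exp t - 1) ω + 1 := by
    funext ω
    by_cases h : ω ∈ A <;> simp [h]
  rw [mgf, hexp, integral_add ((integrable_const _).indicator hA) (integrable_const 1),
    integral_indicator_const _ hA, integral_const, smul_eq_mul, smul_eq_mul, probReal_univ]
  ring

lemma chernoff_exponent_eq_neg_bernoulliKL {γ p : ℝ} (hγ0 : 0 < γ) (hγ1 : γ < 1) (hp0 : 0 < p)
    (hp1 : p < 1) :
    -(log (γ * (1 - p) / (p * (1 - γ))) * γ) + log ((1 - p) / (1 - γ)) = -bernoulliKL γ p := by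
  have h1γ : 0 < 1 - γ := by linarith
  have h1p : 0 < 1 - p := by linarith
  rw [bernoulliKL, Real.log_div (by positivity) (by positivity),
    Real.log_mul hγ0.ne' h1p.ne', Real.log_mul hp0.ne' h1γ.ne',
    Real.log_div hγ0.ne' hp0.ne', Real.log_div h1γ.ne' h1p.ne', Real.log_div h1p.ne' h1γ.ne']
  ring

theorem measureReal_sum_indicator_le_le_exp [Fintype ι] {A : ι → Set Ω}
    (hA : ∀ i, MeasurableSet (A i)) (hind : iIndepFun (fun i => (A i).indicator (1 : Ω → ℝ)) μ)
    {γ p : ℝ} (hγ0 : 0 < γ) (hγp : γ ≤ p) (hp1 : p < 1) (hp : ∀ i, p ≤ μ.real (A i)) :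
    μ.real {ω | ∑ i, (A i).indicator 1 ω ≤ Fintype.card ι * γ}
      ≤ exp (-(Fintype.card ι * bernoulliKL γ p)) := by
  have hp0 : 0 < p := hγ0.trans_le hγp
  have h1γ : 0 < 1 - γ := by linarith
  have h1p : 0 < 1 - p := by linarith
  set t := log (γ * (1 - p) / (p * (1 - γ)))
  have ht : t ≤ 0 :=
    Real.log_nonpos (by positivity) ((div_le_one (by positivity)).2 (by nlinarith))
  have hmgf : ∀ i ∈ Finset.univ, mgf ((A i).indicator 1) μ t ≤ (1 - p) / (1 - γ) := by
    intro i _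
    have hexp : exp t - 1 ≤ 0 := by linarith [Real.exp_le_one_iff.2 ht]
    calc mgf ((A i).indicator 1) μ t = 1 + μ.real (A i) * (exp t - 1) := mgf_indicator_one (hA i) t
      _ ≤ 1 + p * (exp t - 1) := by nlinarith [hp i]
      _ = (1 - p) / (1 - γ) := by
        rw [Real.exp_log (by positivity)]; field_simp; ring
  have hrange : ∀ ω, (∑ i, (A i).indicator 1) ω ∈ Set.Icc (0 : ℝ) (Fintype.card ι) := by
    intro ω
    rw [Finset.sum_apply]
    refine ⟨Finset.sum_nonneg fun i _ => Set.indicator_nonneg (fun _ _ => zero_le_one) ω, ?_⟩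
    simpa using Finset.sum_le_card_nsmul Finset.univ (fun i => (A i).indicator (1 : Ω → ℝ) ω) 1
      fun i _ => Set.indicator_le_self' (fun _ _ => zero_le_one) ω
  have hmeas : ∀ i, Measurable ((A i).indicator (1 : Ω → ℝ)) :=
    fun i => measurable_one.indicator (hA i)
  calc μ.real {ω | ∑ i, (A i).indicator 1 ω ≤ Fintype.card ι * γ}
      = μ.real {ω | (∑ i, (A i).indicator 1) ω ≤ Fintype.card ι * γ} := by
        simp only [Finset.sum_apply]
    _ ≤ exp (-t * (Fintype.card ι * γ)) * mgf (∑ i, (A i).indicator 1) μ t :=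
        measure_le_le_exp_mul_mgf _ ht <| integrable_exp_mul_of_mem_Icc
          (by fun_prop : Measurable (∑ i, (A i).indicator (1 : Ω → ℝ))).aemeasurable
          (ae_of_all _ hrange)
    _ = exp (-t * (Fintype.card ι * γ)) * ∏ i, mgf ((A i).indicator 1) μ t := by
        rw [hind.mgf_sum hmeas]
    _ ≤ exp (-t * (Fintype.card ι * γ)) * ((1 - p) / (1 - γ)) ^ Fintype.card ι := by
        gcongr
        exact (Finset.prod_le_prod (fun i _ => mgf_nonneg) hmgf).trans_eq
          (by rw [Finset.prod_const, Finset.card_univ])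
    _ = exp (Fintype.card ι * (-(t * γ) + log ((1 - p) / (1 - γ)))) := by
        rw [mul_add, exp_add, exp_nat_mul (log _), exp_log (by positivity)]
        ring_nf
    _ = exp (-(Fintype.card ι * bernoulliKL γ p)) := by
        rw [chernoff_exponent_eq_neg_bernoulliKL hγ0 (by linarith) hp0 hp1, mul_neg]

end Chernoff

lemma exists_cdf_eq_of_continuous {ν : Measure ℝ} [IsProbabilityMeasure ν]
    (hc : Continuous (cdf ν)) {τ : ℝ} (h0 : 0 < τ) (h1 : τ < 1) : ∃ s, cdf ν s = τ := by
  obtain ⟨a, ha⟩ := ((tendsto_cdf_atBot ν).eventually (gt_mem_nhds h0)).exists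
  obtain ⟨b, hb⟩ := ((tendsto_cdf_atTop ν).eventually (lt_mem_nhds h1)).exists
  exact intermediate_value_univ a b hc ⟨ha.le, hb.le⟩

lemma abs_cdf_sub_le_iSup {ι : Type*} (ν : ι → Measure ℝ) [∀ i, IsProbabilityMeasure (ν i)]
    (i k : ι) (t : ℝ) :
    |cdf (ν i) t - cdf (ν k) t| ≤ ⨆ j, ⨆ u, |cdf (ν j) u - cdf (ν k) u| := by
  refine le_ciSup₂ (f := fun j u => |cdf (ν j) u - cdf (ν k) u|) ⟨1, ?_⟩ i t
  rintro _ ⟨_, ⟨j, rfl⟩, ⟨u, rfl⟩⟩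
  exact abs_sub_le_iff.2 ⟨by linarith [cdf_nonneg (ν k) u, cdf_le_one (ν j) u],
    by linarith [cdf_nonneg (ν j) u, cdf_le_one (ν k) u]⟩

section EmpiricalQuantile

variable {n : ℕ}

lemma exists_le_of_lt_ecdf {x : Fin n → ℝ} {γ t : ℝ} (hγ : 0 ≤ γ) (h : γ < ecdf x t) :
    ∃ i, x i ≤ t := by
  by_contra! hlt
  have hempty : Finset.univ.filter (fun i => x i ≤ t) = ∅ :=
    Finset.filter_false_of_mem fun i _ => not_le.2 (hlt i)
  simp only [ecdf, hempty, Finset.card_empty, Nat.cast_zero, zero_div] at h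
  linarith

lemma Qplus_ecdf_le {x : Fin n → ℝ} {γ s : ℝ} (hγ : 0 ≤ γ) (hs : γ < ecdf x s) :
    Qplus γ (ecdf x) ≤ s := by
  obtain ⟨m, hm⟩ := (Set.finite_range x).bddBelow
  refine csInf_le ⟨m, fun t ht => ?_⟩ hs
  obtain ⟨i, hi⟩ := exists_le_of_lt_ecdf hγ ht
  exact (hm ⟨i, rfl⟩).trans hi

lemma ecdf_eq_sum_indicator (x : Fin n → ℝ) (t : ℝ) :
    ecdf x t = (∑ i, (Set.Iic t).indicator 1 (x i)) / n := by
  simp [ecdf, Set.indicator_apply, Finset.sum_boole]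

end EmpiricalQuantile

section Sample

variable {Ω : Type*} [MeasurableSpace Ω] {μ : Measure Ω} [IsProbabilityMeasure μ] {n : ℕ}

lemma cdf_map_eq_measureReal {X : Ω → ℝ} (hX : Measurable X) (t : ℝ) :
    cdf (μ.map X) t = μ.real {ω | X ω ≤ t} := by
  have := Measure.isProbabilityMeasure_map (μ := μ) hX.aemeasurable
  rw [cdf_eq_real, map_measureReal_apply hX measurableSet_Iic]
  rfl

lemma measurable_ecdf {x : Fin n → Ω → ℝ} (hx : ∀ i, Measurable (x i)) (t : ℝ) :
    Measurable fun ω => ecdf (fun i => x i ω) t := by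
  simp_rw [ecdf_eq_sum_indicator]
  exact (Finset.measurable_sum _ fun i _ =>
    (measurable_one.indicator measurableSet_Iic).comp (hx i)).div_const _

theorem measureReal_ecdf_le_le_exp (hn : 0 < n) {x : Fin n → Ω → ℝ} (hx : ∀ i, Measurable (x i))
    (hind : iIndepFun x μ) {s γ p : ℝ} (hγ0 : 0 < γ) (hγp : γ ≤ p) (hp1 : p < 1)
    (hp : ∀ i, p ≤ μ.real {ω | x i ω ≤ s}) :
    μ.real {ω | ecdf (fun i => x i ω) s ≤ γ} ≤ exp (-(n * bernoulliKL γ p)) := by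
  have hind' : iIndepFun (fun i => {ω | x i ω ≤ s}.indicator (1 : Ω → ℝ)) μ :=
    hind.comp _ fun _ => measurable_one.indicator measurableSet_Iic
  have htail := measureReal_sum_indicator_le_le_exp
    (fun i => measurableSet_le (hx i) measurable_const) hind' hγ0 hγp hp1 hp
  rw [Fintype.card_fin] at htail
  refine le_of_eq_of_le (congrArg μ.real (Set.ext fun ω => ?_)) htail
  rw [Set.mem_ofPred_eq, ecdf_eq_sum_indicator, div_le_iff₀ (Nat.cast_pos.2 hn), mul_comm]
  rfl

theorem one_sub_exp_le_measureReal_Qplus_le (hn : 0 < n) {x : Fin n → Ω → ℝ}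
    (hx : ∀ i, Measurable (x i)) (hind : iIndepFun x μ) {s γ p : ℝ} (hγ0 : 0 < γ) (hγp : γ ≤ p)
    (hp1 : p < 1) (hp : ∀ i, p ≤ μ.real {ω | x i ω ≤ s}) :
    1 - exp (-(n * bernoulliKL γ p)) ≤ μ.real {ω | Qplus γ (ecdf (fun i => x i ω)) ≤ s} := by
  have hM : MeasurableSet {ω | ecdf (fun i => x i ω) s ≤ γ} :=
    measurableSet_le (measurable_ecdf hx s) measurable_const
  calc 1 - exp (-(n * bernoulliKL γ p)) ≤ 1 - μ.real {ω | ecdf (fun i => x i ω) s ≤ γ} := by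
        linarith [measureReal_ecdf_le_le_exp hn hx hind hγ0 hγp hp1 hp]
    _ = μ.real {ω | ecdf (fun i => x i ω) s ≤ γ}ᶜ := (probReal_compl_eq_one_sub hM).symm
    _ ≤ _ := measureReal_mono fun ω hω => Qplus_ecdf_le hγ0.le (not_le.1 hω)

end Sample

/-- Concentration of the empirical quantile under distribution shift (right quantile):
for independent samples `x i` with continuous CDFs `F i` and
`φ = max_i ‖F i - F (n-1)‖_∞`, with probability at least `1 - δ`,
`Fₙ(Q⁺_γ(F̂)) - γ ≤ φ + (1-ε)⁻¹ [√(2γ(1-γ)log(1/δ)/n) + (2/3 + 1/(2ε))·log(1/δ)/n]`. -/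
theorem stmt10 {Ω : Type*} [MeasurableSpace Ω] (μ : Measure Ω) [IsProbabilityMeasure μ]
    {n : ℕ} (hn : 0 < n) (x : Fin n → Ω → ℝ)
    (hmeas : ∀ i, Measurable (x i))
    (hind : iIndepFun x μ)
    (F : Fin n → ℝ → ℝ)
    (hF : ∀ i t, F i t = (μ {ω | x i ω ≤ t}).toReal)
    (hcont : ∀ i, Continuous (F i))
    (φ : ℝ)
    (hφ : φ = ⨆ i : Fin n, ⨆ t : ℝ, |F i t - F ⟨n - 1, Nat.sub_lt hn Nat.one_pos⟩ t|)
    (γ δ ε : ℝ) (hγ : γ ∈ Set.Ioo (0 : ℝ) 1) (hδ : δ ∈ Set.Ioo (0 : ℝ) 1)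
    (hε : ε ∈ Set.Ioo (0 : ℝ) 1) :
    1 - δ ≤ (μ {ω | F ⟨n - 1, Nat.sub_lt hn Nat.one_pos⟩
        (Qplus γ (ecdf (fun i => x i ω))) - γ ≤
        φ + (1 - ε)⁻¹ * (Real.sqrt (2 * γ * (1 - γ) * Real.log (1 / δ) / n) +
          (2 / 3 + 1 / (2 * ε)) * Real.log (1 / δ) / n)}).toReal := by
  obtain ⟨hγ0, hγ1⟩ := hγ
  obtain ⟨hδ0, hδ1⟩ := hδ
  obtain ⟨hε0, hε1⟩ := hε
  set k : Fin n := ⟨n - 1, Nat.sub_lt hn Nat.one_pos⟩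
  change 1 - δ ≤ μ.real {ω | F k (Qplus γ (ecdf (fun i => x i ω))) - γ ≤
    φ + quantileDeviation n γ δ ε}
  set B := quantileDeviation n γ δ ε
  have hB0 : 0 ≤ B := quantileDeviation_nonneg hδ0 hδ1.le hε0 hε1
  have hprob (i : Fin n) : IsProbabilityMeasure (μ.map (x i)) :=
    Measure.isProbabilityMeasure_map (hmeas i).aemeasurable
  obtain rfl : F = fun i => ⇑(cdf (μ.map (x i))) :=
    funext fun i => funext fun t => by rw [hF, cdf_map_eq_measureReal (hmeas i)]; rfl
  beta_reduce at *
  have hφle (i : Fin n) (t : ℝ) : |cdf (μ.map (x i)) t - cdf (μ.map (x k)) t| ≤ φ :=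
    (abs_cdf_sub_le_iSup _ i k t).trans_eq hφ.symm
  have hφ0 : 0 ≤ φ := (abs_nonneg _).trans (hφle k 0)
  by_cases hτ : 1 ≤ γ + φ + B
  · refine le_of_le_of_eq ?_ (congrArg μ.real (Set.eq_univ_of_forall fun ω => ?_)).symm
    · rw [probReal_univ]; linarith
    · change _ - γ ≤ φ + B
      linarith [cdf_le_one (μ.map (x k)) (Qplus γ (ecdf (fun i => x i ω)))]
  obtain ⟨s, hs⟩ := exists_cdf_eq_of_continuous (hcont k) (by positivity) (not_le.1 hτ)
  have hp (i : Fin n) : γ + B ≤ μ.real {ω | x i ω ≤ s} :=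
    (by linarith [(abs_sub_le_iff.1 (hφle i s)).2] : γ + B ≤ _).trans_eq (hF i s)
  calc 1 - δ ≤ 1 - exp (-(n * bernoulliKL γ (γ + B))) := by
        linarith [exp_neg_mul_bernoulliKL_quantileDeviation_le hn hγ0 hδ0 hδ1.le hε0 hε1
          (by linarith : γ + B < 1)]
    _ ≤ μ.real {ω | Qplus γ (ecdf (fun i => x i ω)) ≤ s} :=
        one_sub_exp_le_measureReal_Qplus_le hn hmeas hind hγ0 (by linarith) (by linarith) hp
    _ ≤ _ := measureReal_mono fun ω (hω : _ ≤ s) => by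
        change _ - γ ≤ φ + B
        linarith [monotone_cdf (μ.map (x k)) hω]
end

section
/- Let x_1,...,x_n be independent real random variables with continuous CDFs F_1,...,F_n, empirical CDF F̂, and φ = max_i ‖F_i − F_n‖_∞. For any γ, δ ∈ (0,1) and ε ∈ (0,1), with probability at least 1 − δ: γ − F_n(Q⁻_γ(F̂)) ≤ φ + (1−ε)^{-1}[√(2γ(1−γ)log(1/δ)/n) + (2/3 + 1/(2ε))·log(1/δ)/n]. -/
open MeasureTheory ProbabilityTheory

/-!
Put `U i = F i (x i)` and `s = γ - t`, where `t` is the deviation in the claim. At least `γ n` of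
the samples lie below the empirical quantile `Q`, so if fewer than `γ n` of the `U i` are below `s`,
one sample `x i ≤ Q` has `U i ≥ s`, whence `F_n(Q) ≥ F_i(Q) - φ ≥ s - φ`. By the probability
integral transform the indicators of `U i < s` are independent Bernoulli variables of mean at most
`s`, so by Bernstein's inequality at least `γ n = n (s + t)` of them equal one with probability at
most `exp (-n t² / (2 (s (1 - s) + t / 3)))`, and the choice of `t` makes this at most `δ`.
-/

open Real Finset Filter

section

variable {n : ℕ}

lemma setOf_le_ecdf_eq_iUnion (y : Fin n → ℝ) (γ : ℝ) :
    {q | γ ≤ ecdf y q} =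
      ⋃ (S : Finset (Fin n)) (_ : γ ≤ (#S : ℝ) / n), ⋂ i ∈ S, Set.Ici (y i) := by
  ext q
  simp only [Set.mem_ofPred_eq, Set.mem_iUnion, Set.mem_iInter, Set.mem_Ici, exists_prop]
  constructor
  · exact fun h => ⟨_, h, fun i hi => (mem_filter.mp hi).2⟩
  · rintro ⟨S, hS, hSq⟩
    refine hS.trans (div_le_div_of_nonneg_right ?_ n.cast_nonneg)
    exact_mod_cast card_le_card fun i hi => mem_filter.mpr ⟨mem_univ i, hSq i hi⟩

lemma isClosed_setOf_le_ecdf (y : Fin n → ℝ) (γ : ℝ) : IsClosed {q | γ ≤ ecdf y q} := by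
  rw [setOf_le_ecdf_eq_iUnion]
  exact isClosed_iUnion_of_finite fun S => isClosed_iUnion_of_finite fun _ =>
    isClosed_biInter fun i _ => isClosed_Ici

lemma le_ecdf_Qminus (hn : 0 < n) (y : Fin n → ℝ) {γ : ℝ} (hγ0 : 0 < γ) (hγ1 : γ ≤ 1) :
    γ ≤ ecdf y (Qminus γ (ecdf y)) := by
  obtain ⟨b, hb⟩ := (Set.finite_range y).bddBelow
  obtain ⟨B, hB⟩ := (Set.finite_range y).bddAbove
  have hne : {q | γ ≤ ecdf y q}.Nonempty := by
    refine ⟨B, ?_⟩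
    have hall : univ.filter (fun i => y i ≤ B) = univ :=
      filter_true_of_mem fun i _ => hB (Set.mem_range_self i)
    rwa [Set.mem_ofPred_eq, ecdf, hall, card_univ, Fintype.card_fin,
      div_self (Nat.cast_pos.mpr hn).ne']
  have hbdd : BddBelow {q | γ ≤ ecdf y q} := by
    refine ⟨b, fun q hq => ?_⟩
    have hpos : 0 < #(univ.filter fun i => y i ≤ q) := by
      by_contra h
      simp only [Set.mem_ofPred_eq, ecdf, Nat.eq_zero_of_not_pos h, Nat.cast_zero, zero_div] at hq
      linarith
    obtain ⟨i, hi⟩ := card_pos.mp hpos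
    exact (hb (Set.mem_range_self i)).trans (mem_filter.mp hi).2
  exact (isClosed_setOf_le_ecdf y γ).csInf_mem hne hbdd

lemma sub_le_apply_Qminus_of_card_lt (hn : 0 < n) (y : Fin n → ℝ) {F : Fin n → ℝ → ℝ}
    (hF : ∀ i, Monotone (F i)) {j : Fin n} {φ : ℝ} (hφ : ∀ i t, F i t - F j t ≤ φ)
    {γ s : ℝ} (hγ0 : 0 < γ) (hγ1 : γ ≤ 1)
    (hcount : (#(univ.filter fun i => F i (y i) < s) : ℝ) < n * γ) :
    s - φ ≤ F j (Qminus γ (ecdf y)) := by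
  set Q := Qminus γ (ecdf y)
  have hQ : n * γ ≤ #(univ.filter fun i => y i ≤ Q) := by
    have := le_ecdf_Qminus hn y hγ0 hγ1
    rwa [ecdf, le_div_iff₀' (Nat.cast_pos.mpr hn)] at this
  obtain ⟨i, hiQ, his⟩ :=
    exists_mem_notMem_of_card_lt_card (by exact_mod_cast hcount.trans_le hQ)
  simp only [mem_filter, mem_univ, true_and, not_lt] at hiQ his
  linarith [hF i hiQ, hφ i Q]

end

lemma le_of_hasDerivAt_le {f g f' g' : ℝ → ℝ} (hf : ∀ y, HasDerivAt f (f' y) y)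
    (hg : ∀ y, HasDerivAt g (g' y) y) (h0 : f 0 ≤ g 0) (hd : ∀ y, 0 < y → f' y ≤ g' y)
    {y : ℝ} (hy : 0 ≤ y) : f y ≤ g y := by
  have hmono : MonotoneOn (g - f) (Set.Ici 0) := by
    refine monotoneOn_of_hasDerivWithinAt_nonneg (convex_Ici 0) (f' := g' - f')
      (fun z _ => ((hg z).sub (hf z)).continuousAt.continuousWithinAt)
      (fun z _ => ((hg z).sub (hf z)).hasDerivWithinAt) fun z hz => ?_
    rw [interior_Ici] at hz
    exact sub_nonneg.mpr (hd z hz)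
  have := hmono Set.self_mem_Ici (Set.mem_Ici.mpr hy) hy
  simp only [Pi.sub_apply] at this
  linarith

lemma hasDerivAt_exp_sub_one_sub (y : ℝ) :
    HasDerivAt (fun z => exp z - 1 - z) (exp y - 1) y :=
  ((hasDerivAt_exp y).sub_const 1).sub (hasDerivAt_id' y)

lemma one_sub_div_three_mul_exp_sub_one_sub_le {y : ℝ} (hy : 0 ≤ y) :
    (1 - y / 3) * (exp y - 1 - y) ≤ y ^ 2 / 2 := by
  have hlin (z : ℝ) : HasDerivAt (fun z : ℝ => 1 - z / 3) (-(1 / 3)) z := by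
    simpa using ((hasDerivAt_id z).div_const 3).const_sub 1
  have hderiv : ∀ y, 0 ≤ y →
      -(1 / 3) * (exp y - 1 - y) + (1 - y / 3) * (exp y - 1) ≤ y := by
    refine fun y hy => le_of_hasDerivAt_le (g' := fun _ => 1)
      (fun z => ((hasDerivAt_exp_sub_one_sub z).const_mul _).add
        ((hlin z).mul ((hasDerivAt_exp z).sub_const 1)))
      hasDerivAt_id (by simp) (fun z _ => ?_) hy
    -- `1 + (z - 1) e^z ≥ 0` is `e^{-z} ≥ 1 - z` multiplied by `e^z`
    have h := mul_le_mul_of_nonneg_right (add_one_le_exp (-z)) (exp_pos z).le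
    rw [← exp_add, neg_add_cancel, exp_zero] at h
    nlinarith
  refine le_of_hasDerivAt_le (fun z => (hlin z).mul (hasDerivAt_exp_sub_one_sub z))
    (g := fun z => z ^ 2 / 2) (fun z => ?_) (by simp) (fun z hz => hderiv z hz.le) hy
  simpa using (hasDerivAt_pow 2 z).div_const 2

lemma one_add_mul_exp_sub_one_le {p l : ℝ} (hp0 : 0 ≤ p) (hp1 : p ≤ 1) (hl : 0 ≤ l) :
    1 + p * (exp l - 1) ≤ exp (l * p + p * (1 - p) * (exp l - 1 - l)) := by
  have hexp (c y : ℝ) : HasDerivAt (fun z => exp (z * c)) (c * exp (y * c)) y := by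
    simpa [mul_comm, Function.comp_def] using
      (hasDerivAt_exp (y * c)).comp y ((hasDerivAt_id y).mul_const c)
  -- the mgf of the centred Bernoulli variable `B - p`
  have hcentred : (1 - p) * exp (l * -p) + p * exp (l * (1 - p)) ≤
      1 + p * (1 - p) * (exp l - 1 - l) := by
    refine le_of_hasDerivAt_le
      (fun z => ((hexp (-p) z).const_mul _).add ((hexp (1 - p) z).const_mul _))
      (fun z => ((hasDerivAt_exp_sub_one_sub z).const_mul _).const_add 1) (by simp)
      (fun z hz => ?_) hl
    have hdiff : exp (z * (1 - p)) - exp (z * -p) ≤ exp z - 1 := by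
      have h : exp (z * (1 - p)) = exp (z * -p) * exp z := by rw [← exp_add]; ring_nf
      have : exp (z * -p) ≤ 1 := exp_le_one_iff.mpr (by nlinarith)
      nlinarith [one_le_exp hz.le]
    linarith [mul_le_mul_of_nonneg_left hdiff (mul_nonneg hp0 (sub_nonneg.mpr hp1))]
  have e1 : exp (l * p) * exp (l * -p) = 1 := by
    rw [← exp_add, mul_neg, add_neg_cancel, exp_zero]
  have e2 : exp (l * p) * exp (l * (1 - p)) = exp l := by rw [← exp_add]; ring_nf
  calc 1 + p * (exp l - 1)
        = exp (l * p) * ((1 - p) * exp (l * -p) + p * exp (l * (1 - p))) := by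
        linear_combination -((1 - p) * e1 + p * e2)
    _ ≤ exp (l * p) * exp (p * (1 - p) * (exp l - 1 - l)) := by
        gcongr
        linarith [add_one_le_exp (p * (1 - p) * (exp l - 1 - l))]
    _ = exp (l * p + p * (1 - p) * (exp l - 1 - l)) := (exp_add _ _).symm

lemma measure_cdf_lt_le {ν : Measure ℝ} [IsProbabilityMeasure ν] (hcont : Continuous (cdf ν))
    (s : ℝ) : ν {t | cdf ν t < s} ≤ ENNReal.ofReal s := by
  set A := {t | cdf ν t < s}
  rcases A.eq_empty_or_nonempty with hA | hA
  · simp [hA]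
  by_cases hbdd : BddAbove A
  · have hτ : cdf ν (sSup A) ≤ s :=
      closure_minimal (fun t (ht : cdf ν t < s) => ht.le) (isClosed_le hcont continuous_const)
        (csSup_mem_closure hA hbdd)
    calc ν A ≤ ν (Set.Iic (sSup A)) := measure_mono fun t ht => le_csSup hbdd ht
      _ = ENNReal.ofReal (cdf ν (sSup A)) := (ofReal_cdf ν _).symm
      _ ≤ ENNReal.ofReal s := ENNReal.ofReal_le_ofReal hτ
  · have hall : ∀ t, cdf ν t < s := fun t => by
      obtain ⟨u, hu, htu⟩ := not_bddAbove_iff.mp hbdd t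
      exact ((cdf ν).mono htu.le).trans_lt hu
    have hs : 1 ≤ s :=
      le_of_tendsto (tendsto_cdf_atTop ν) (Eventually.of_forall fun t => (hall t).le)
    calc ν A ≤ 1 := prob_le_one
      _ ≤ ENNReal.ofReal s := by
        rwa [← ENNReal.ofReal_one, ENNReal.ofReal_le_ofReal_iff (by linarith)]

lemma cdf_sub_cdf_le_iSup {ι : Type*} [Finite ι] (ν : ι → Measure ℝ) (k i : ι) (r : ℝ) :
    cdf (ν i) r - cdf (ν k) r ≤ ⨆ i, ⨆ t, |cdf (ν i) t - cdf (ν k) t| := by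
  have hbdd (i : ι) : BddAbove (Set.range fun t => |cdf (ν i) t - cdf (ν k) t|) := by
    refine ⟨1, ?_⟩
    rintro _ ⟨t, rfl⟩
    exact abs_sub_le_iff.mpr ⟨by linarith [cdf_le_one (ν i) t, cdf_nonneg (ν k) t],
      by linarith [cdf_le_one (ν k) t, cdf_nonneg (ν i) t]⟩
  exact (le_abs_self _).trans ((le_ciSup (hbdd i) r).trans
    (le_ciSup (f := fun i => ⨆ t, |cdf (ν i) t - cdf (ν k) t|) (Set.finite_range _).bddAbove i))

section

variable {Ω : Type*} [MeasurableSpace Ω] {μ : Measure Ω} [IsProbabilityMeasure μ]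

lemma cdf_map_apply {X : Ω → ℝ} (hX : Measurable X) (r : ℝ) :
    cdf (μ.map X) r = μ.real {ω | X ω ≤ r} := by
  have := Measure.isProbabilityMeasure_map (μ := μ) hX.aemeasurable
  rw [cdf_eq_real, map_measureReal_apply hX measurableSet_Iic]
  rfl

lemma one_sub_le_measureReal_of_compl_subset {s u : Set Ω} {δ : ℝ} (hs : μ.real s ≤ δ)
    (hsu : sᶜ ⊆ u) : 1 - δ ≤ μ.real u := by
  have := measureReal_union_le (μ := μ) s sᶜ
  rw [Set.union_compl_self, probReal_univ] at this
  linarith [measureReal_mono (μ := μ) hsu]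

lemma mgf_le_of_bernoulli_s11 {X : Ω → ℝ} (hX : Measurable X) (hval : ∀ ω, X ω = 0 ∨ X ω = 1)
    {p l : ℝ} (hp0 : 0 ≤ p) (hp1 : p ≤ 1) (hmean : μ[X] ≤ p) (hl : 0 ≤ l) :
    mgf X μ l ≤ exp (l * p + p * (1 - p) * (exp l - 1 - l)) := by
  have hint : Integrable X μ := .of_mem_Icc 0 1 hX.aemeasurable <| ae_of_all _ fun ω => by
    rcases hval ω with h | h <;> simp [h]
  have hlin : (fun ω => exp (l * X ω)) = fun ω => 1 + (exp l - 1) * X ω := by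
    funext ω
    rcases hval ω with h | h <;> simp [h]
  calc mgf X μ l = 1 + (exp l - 1) * μ[X] := by
        rw [mgf, hlin, integral_add (integrable_const 1) (hint.const_mul _), integral_const_mul]
        simp
    _ ≤ 1 + p * (exp l - 1) := by nlinarith [one_le_exp hl]
    _ ≤ _ := one_add_mul_exp_sub_one_le hp0 hp1 hl

variable {ι : Type*} [Fintype ι] {X : ι → Ω → ℝ}

lemma measure_sum_ge_le_of_bernoulli_s11 (hX : ∀ i, Measurable (X i)) (hind : iIndepFun X μ)
    (hval : ∀ i ω, X i ω = 0 ∨ X i ω = 1) {p l : ℝ} (hp0 : 0 ≤ p) (hp1 : p ≤ 1)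
    (hmean : ∀ i, μ[X i] ≤ p) (hl : 0 ≤ l) (c : ℝ) :
    μ.real {ω | c ≤ ∑ i, X i ω} ≤
      exp (-(l * c) + Fintype.card ι * (l * p + p * (1 - p) * (exp l - 1 - l))) := by
  have hint (i : ι) (_ : i ∈ univ) : Integrable (fun ω => exp (l * X i ω)) μ :=
    integrable_exp_mul_of_le l 1 hl (hX i).aemeasurable <| ae_of_all _ fun ω => by
      rcases hval i ω with h | h <;> simp [h]
  calc μ.real {ω | c ≤ ∑ i, X i ω} = μ.real {ω | c ≤ (∑ i, X i) ω} := by simp [Finset.sum_apply]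
    _ ≤ exp (-l * c) * mgf (∑ i, X i) μ l :=
        measure_ge_le_exp_mul_mgf c hl (hind.integrable_exp_mul_sum hX hint)
    _ = exp (-l * c) * ∏ i, mgf (X i) μ l := by rw [hind.mgf_sum hX]
    _ ≤ exp (-l * c) * ∏ _i : ι, exp (l * p + p * (1 - p) * (exp l - 1 - l)) := by
        gcongr with i
        · exact fun _ _ => mgf_nonneg
        · exact mgf_le_of_bernoulli_s11 (hX i) (hval i) hp0 hp1 (hmean i) hl
    _ = _ := by rw [prod_const, card_univ, ← exp_nat_mul, ← exp_add, neg_mul]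

theorem measure_sum_ge_le_bernstein (hX : ∀ i, Measurable (X i)) (hind : iIndepFun X μ)
    (hval : ∀ i ω, X i ω = 0 ∨ X i ω = 1) {p t : ℝ} (hp0 : 0 ≤ p) (hp1 : p ≤ 1)
    (hmean : ∀ i, μ[X i] ≤ p) (ht : 0 < t) :
    μ.real {ω | Fintype.card ι * (p + t) ≤ ∑ i, X i ω} ≤
      exp (-(Fintype.card ι * t ^ 2 / (2 * (p * (1 - p) + t / 3)))) := by
  set σ2 := p * (1 - p)
  have hσ : 0 < σ2 + t / 3 := by have : 0 ≤ σ2 := mul_nonneg hp0 (by linarith); positivity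
  set l := t / (σ2 + t / 3)
  have hl : 0 ≤ l := by positivity
  have hlt : l * (σ2 + t / 3) = t := div_mul_cancel₀ t hσ.ne'
  -- the choice of `l` makes `1 - l / 3 = σ2 / (σ2 + t / 3)`
  have hE : σ2 * (exp l - 1 - l) ≤ l * t / 2 := by
    have h := mul_le_mul_of_nonneg_left (one_sub_div_three_mul_exp_sub_one_sub_le hl) hσ.le
    have hσ2 : σ2 = (σ2 + t / 3) * (1 - l / 3) := by linear_combination hlt / 3
    calc σ2 * (exp l - 1 - l) = (σ2 + t / 3) * ((1 - l / 3) * (exp l - 1 - l)) := by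
          linear_combination (exp l - 1 - l) * hσ2
      _ ≤ (σ2 + t / 3) * (l ^ 2 / 2) := h
      _ = l * t / 2 := by linear_combination l / 2 * hlt
  refine (measure_sum_ge_le_of_bernoulli_s11 hX hind hval hp0 hp1 hmean hl _).trans ?_
  gcongr
  have hrate : Fintype.card ι * t ^ 2 / (2 * (σ2 + t / 3)) = Fintype.card ι * (l * t) / 2 := by
    simp only [l]; field_simp
  rw [hrate]
  nlinarith [mul_le_mul_of_nonneg_left hE (Nat.cast_nonneg (Fintype.card ι) : (0 : ℝ) ≤ _)]

lemma measure_card_cdf_lt_ge_le {x : ι → Ω → ℝ} (hmeas : ∀ i, Measurable (x i))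
    (hind : iIndepFun x μ) (hcont : ∀ i, Continuous (cdf (μ.map (x i)))) {s t : ℝ}
    (hs0 : 0 ≤ s) (hs1 : s ≤ 1) (ht : 0 < t) :
    μ.real {ω | Fintype.card ι * (s + t) ≤ #{i | cdf (μ.map (x i)) (x i ω) < s}} ≤
      exp (-(Fintype.card ι * t ^ 2 / (2 * (s * (1 - s) + t / 3)))) := by
  set A : ι → Set ℝ := fun i => {r | cdf (μ.map (x i)) r < s}
  have hA (i : ι) : MeasurableSet (A i) := measurableSet_lt (hcont i).measurable measurable_const
  have hX (i : ι) : Measurable ((A i).indicator (1 : ℝ → ℝ) ∘ x i) :=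
    (measurable_one.indicator (hA i)).comp (hmeas i)
  have hmean (i : ι) : μ[(A i).indicator (1 : ℝ → ℝ) ∘ x i] ≤ s := by
    have : IsProbabilityMeasure (μ.map (x i)) :=
      Measure.isProbabilityMeasure_map (hmeas i).aemeasurable
    change ∫ ω, (x i ⁻¹' A i).indicator 1 ω ∂μ ≤ s
    rw [integral_indicator_one (hmeas i (hA i)),
      ← map_measureReal_apply (hmeas i) (hA i), measureReal_def, ← ENNReal.toReal_ofReal hs0]
    exact ENNReal.toReal_mono ENNReal.ofReal_ne_top (measure_cdf_lt_le (hcont i) s)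
  convert measure_sum_ge_le_bernstein hX (hind.comp _ fun i => measurable_one.indicator (hA i))
    (fun i ω => by by_cases h : x i ω ∈ A i <;> simp [h]) hs0 hs1 hmean ht using 5 with ω
  simp [Set.indicator_apply, A, Finset.sum_boole]

lemma measure_card_cdf_lt_sub_ge_le [Nonempty ι] {x : ι → Ω → ℝ} (hmeas : ∀ i, Measurable (x i))
    (hind : iIndepFun x μ) (hcont : ∀ i, Continuous (cdf (μ.map (x i)))) {γ t c : ℝ}
    (hγ0 : 0 < γ) (hγ1 : γ ≤ 1) (ht : 0 < t)
    (hrate : 2 * c * ((γ - t) * (1 - (γ - t)) + t / 3) ≤ t ^ 2) :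
    μ.real {ω | Fintype.card ι * γ ≤ #{i | cdf (μ.map (x i)) (x i ω) < γ - t}} ≤
      exp (-(Fintype.card ι * c)) := by
  have hcard : (0 : ℝ) < Fintype.card ι := Nat.cast_pos.mpr Fintype.card_pos
  rcases lt_or_ge (γ - t) 0 with hs | hs
  · have hempty (ω : Ω) : #{i | cdf (μ.map (x i)) (x i ω) < γ - t} = 0 := card_eq_zero.mpr <|
      filter_eq_empty_iff.mpr fun i _ => not_lt.mpr (hs.le.trans (cdf_nonneg _ _))
    have : {ω | Fintype.card ι * γ ≤ #{i | cdf (μ.map (x i)) (x i ω) < γ - t}} = ∅ := by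
      simp only [hempty, Nat.cast_zero, not_le.mpr (mul_pos hcard hγ0), Set.ofPred_false]
    rw [this, measureReal_empty]
    exact (exp_pos _).le
  calc _ ≤ exp (-(Fintype.card ι * t ^ 2 / (2 * ((γ - t) * (1 - (γ - t)) + t / 3)))) := by
        simpa only [sub_add_cancel] using
          measure_card_cdf_lt_ge_le hmeas hind hcont hs (by linarith) ht
    _ ≤ exp (-(Fintype.card ι * c)) := by
        gcongr
        rw [le_div_iff₀ (by nlinarith), mul_assoc]
        exact mul_le_mul_of_nonneg_left (by linarith) hcard.le

end

lemma sq_add_le_sq_of_eq_inv_one_sub_mul {ε a c t : ℝ} (hε0 : 0 < ε) (hε1 : ε < 1) (ha : 0 ≤ a)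
    (hc : 0 ≤ c) (ht : t = (1 - ε)⁻¹ * (a + (2 / 3 + 1 / (2 * ε)) * c)) :
    a ^ 2 + 8 / 3 * t * c ≤ t ^ 2 := by
  have hε : 0 < 1 - ε := by linarith
  have ht0 : 0 ≤ t := by rw [ht]; positivity
  have h1 : (1 - ε) * t = a + (2 / 3 + 1 / (2 * ε)) * c := by
    rw [ht, ← mul_assoc, mul_inv_cancel₀ hε.ne', one_mul]
  have hεt : ε * (1 - ε) * t = ε * a + (2 * ε / 3 + 1 / 2) * c := by
    rw [mul_assoc, h1]; field_simp
  -- multiplied by `2ε(1 - ε)`, this reduces to `16ε²/3 - 4ε + 1 > 0`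
  have hc2 : 2 * c ≤ c / (2 * ε) + ε * t := by
    have hmul : 2 * ε * (1 - ε) * (2 * c) ≤ 2 * ε * (1 - ε) * (c / (2 * ε) + ε * t) := by
      have e : 2 * ε * (1 - ε) * (c / (2 * ε) + ε * t) =
          (1 - ε) * c + 2 * ε * (ε * (1 - ε) * t) := by
        field_simp
      rw [e, hεt]
      nlinarith [mul_nonneg (sq_nonneg (ε - 3 / 8)) hc, mul_nonneg (mul_nonneg hε0.le hε0.le) ha]
    exact le_of_mul_le_mul_left hmul (by positivity)
  have ht' : t = a + 2 / 3 * c + c / (2 * ε) + ε * t := by linear_combination h1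
  have hat : a ≤ t := by
    have : 0 ≤ c / (2 * ε) := by positivity
    nlinarith
  calc a ^ 2 + 8 / 3 * t * c = a * a + 2 / 3 * t * c + t * (2 * c) := by ring
    _ ≤ t * a + 2 / 3 * t * c + t * (c / (2 * ε) + ε * t) := by
        gcongr
    _ = t ^ 2 := by linear_combination -t * ht'

lemma two_mul_mul_bernstein_denom_le_sq {γ ε c t : ℝ} (hγ0 : 0 ≤ γ) (hγ1 : γ ≤ 1) (hε0 : 0 < ε)
    (hε1 : ε < 1) (hc : 0 ≤ c)
    (ht : t = (1 - ε)⁻¹ * (√(2 * γ * (1 - γ) * c) + (2 / 3 + 1 / (2 * ε)) * c)) :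
    2 * c * ((γ - t) * (1 - (γ - t)) + t / 3) ≤ t ^ 2 := by
  have h := sq_add_le_sq_of_eq_inv_one_sub_mul hε0 hε1 (sqrt_nonneg _) hc ht
  rw [sq_sqrt (by have := mul_nonneg hγ0 (sub_nonneg.mpr hγ1); positivity)] at h
  have ht0 : 0 ≤ t := by
    have : 0 < 1 - ε := by linarith
    rw [ht]; positivity
  nlinarith [mul_nonneg hc ht0]

/-- Concentration of the empirical quantile under distribution shift (left quantile):
for independent samples `x i` with continuous CDFs `F i` and
`φ = max_i ‖F i - F (n-1)‖_∞`, with probability at least `1 - δ`,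
`γ - Fₙ(Q⁻_γ(F̂)) ≤ φ + (1-ε)⁻¹ [√(2γ(1-γ)log(1/δ)/n) + (2/3 + 1/(2ε))·log(1/δ)/n]`. -/
theorem stmt11 {Ω : Type*} [MeasurableSpace Ω] (μ : Measure Ω) [IsProbabilityMeasure μ]
    {n : ℕ} (hn : 0 < n) (x : Fin n → Ω → ℝ)
    (hmeas : ∀ i, Measurable (x i))
    (hind : iIndepFun x μ)
    (F : Fin n → ℝ → ℝ)
    (hF : ∀ i t, F i t = (μ {ω | x i ω ≤ t}).toReal)
    (hcont : ∀ i, Continuous (F i))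
    (φ : ℝ)
    (hφ : φ = ⨆ i : Fin n, ⨆ t : ℝ, |F i t - F ⟨n - 1, Nat.sub_lt hn Nat.one_pos⟩ t|)
    (γ δ ε : ℝ) (hγ : γ ∈ Set.Ioo (0 : ℝ) 1) (hδ : δ ∈ Set.Ioo (0 : ℝ) 1)
    (hε : ε ∈ Set.Ioo (0 : ℝ) 1) :
    1 - δ ≤ (μ {ω | γ - F ⟨n - 1, Nat.sub_lt hn Nat.one_pos⟩
        (Qminus γ (ecdf (fun i => x i ω))) ≤
        φ + (1 - ε)⁻¹ * (Real.sqrt (2 * γ * (1 - γ) * Real.log (1 / δ) / n) +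
          (2 / 3 + 1 / (2 * ε)) * Real.log (1 / δ) / n)}).toReal := by
  obtain ⟨hγ0, hγ1⟩ := hγ
  obtain ⟨hδ0, hδ1⟩ := hδ
  obtain ⟨hε0, hε1⟩ := hε
  obtain rfl : F = fun i => ⇑(cdf (μ.map (x i))) :=
    funext₂ fun i r => (hF i r).trans (cdf_map_apply (hmeas i) r).symm
  have : Nonempty (Fin n) := ⟨⟨0, hn⟩⟩
  set c := Real.log (1 / δ) / n
  have hc : 0 < c := div_pos (log_pos (one_lt_one_div hδ0 hδ1)) (Nat.cast_pos.mpr hn)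
  set t := (1 - ε)⁻¹ * (√(2 * γ * (1 - γ) * c) + (2 / 3 + 1 / (2 * ε)) * c) with ht
  have ht0 : 0 < t := by
    have : 0 < 1 - ε := by linarith
    positivity
  have hδc : exp (-(n * c)) = δ := by
    rw [mul_div_cancel₀ _ (Nat.cast_pos.mpr hn).ne', one_div, log_inv, neg_neg, exp_log hδ0]
  have hbad := measure_card_cdf_lt_sub_ge_le hmeas hind hcont hγ0 hγ1.le ht0
    (two_mul_mul_bernstein_denom_le_sq hγ0.le hγ1.le hε0 hε1 hc.le ht)
  rw [Fintype.card_fin, hδc] at hbad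
  have htL : (1 - ε)⁻¹ * (√(2 * γ * (1 - γ) * Real.log (1 / δ) / n) +
      (2 / 3 + 1 / (2 * ε)) * Real.log (1 / δ) / n) = t := by
    simp only [t, c, mul_div_assoc]
  rw [htL]
  refine one_sub_le_measureReal_of_compl_subset hbad fun ω hω => ?_
  have := sub_le_apply_Qminus_of_card_lt hn (fun i => x i ω) (fun i => (cdf _).mono)
    (fun i r => hφ ▸ cdf_sub_cdf_le_iSup _ _ i r) hγ0 hγ1.le (not_le.mp hω)
  simp only [Set.mem_ofPred_eq]
  linarith
end

section
/- In the change-point setting, suppose Q_{t−K+1} = ⋯ = Q_t (all with common continuous CDF F_t) for some K ∈ [t−1], each period contributing B_j i.i.d. samples, and let q̂_{t,K} be the left (1−α)-quantile of the empirical CDF of the pooled B_{t,K} samples from the last K periods. Then for δ ∈ (0,1), with probability at least 1 − δ: |F_t(q̂_{t,K}) − (1−α)| ≤ (5/4)√(2α(1−α)log(2/δ)/B_{t,K}) + 4·log(2/δ)/B_{t,K}. -/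
/-!
The `B = B_{t,K}` pooled samples are independent with the same continuous CDF `G = F_t`.
If `G(q̂) > 1 - α + ε`, the point `c` with `G c = 1 - α + ε` lies below `q̂`, so fewer than
`(1 - α) B` samples fall below `c` although `(1 - α + ε) B` are expected; if `G(q̂) < 1 - α - ε`,
the point `c` with `G c = 1 - α - ε` lies above `q̂`, so at least `(1 - α) B` samples fall below it
although `(1 - α - ε) B` are expected. Either way a binomial count deviates by `ε B` from its mean,
and its variance is at most `B (α (1 - α) + ε)`. Bernstein's inequality bounds each event by
`exp (-(ε B)² / (2 (B (α (1 - α) + ε) + ε B / 3)))`, which the stated `ε` makes at most `δ / 2`.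
-/

open MeasureTheory ProbabilityTheory

open Real Finset
open scoped Nat

lemma two_mul_three_pow_le_factorial (k : ℕ) : 2 * 3 ^ k ≤ (k + 2)! := by
  induction k with
  | zero => decide
  | succ n ih =>
    rw [Nat.factorial_succ, pow_succ]
    nlinarith

lemma Real.hasSum_pow_div_factorial_add_two (x : ℝ) :
    HasSum (fun k : ℕ => x ^ (k + 2) / (k + 2)!) (exp x - 1 - x) := by
  have h := (hasSum_nat_add_iff' 2).mpr (exp_eq_exp_ℝ ▸ NormedSpace.expSeries_div_hasSum_exp x)
  rwa [show ∑ i ∈ range 2, x ^ i / (i ! : ℝ) = 1 + x by simp [sum_range_succ], ← sub_sub] at h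

lemma Real.exp_mul_le_one_add_mul_add_sq_mul {s y : ℝ} (hs0 : 0 ≤ s) (hs3 : s < 3)
    (hy : |y| ≤ 1) : exp (s * y) ≤ 1 + s * y + y ^ 2 * (s ^ 2 / (2 * (1 - s / 3))) := by
  have hterm (k : ℕ) : (s * y) ^ (k + 2) / (k + 2)! ≤ y ^ 2 * (s ^ 2 / 2) * (s / 3) ^ k := by
    have hpow : (s * y) ^ (k + 2) ≤ s ^ (k + 2) * y ^ 2 := calc
      (s * y) ^ (k + 2) ≤ |s * y| ^ (k + 2) := (le_abs_self _).trans (abs_pow _ _).le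
      _ = s ^ (k + 2) * |y| ^ (k + 2) := by rw [abs_mul, abs_of_nonneg hs0, mul_pow]
      _ ≤ s ^ (k + 2) * |y| ^ 2 :=
        mul_le_mul_of_nonneg_left (pow_le_pow_of_le_one (abs_nonneg y) hy (Nat.le_add_left 2 k))
          (by positivity)
      _ = s ^ (k + 2) * y ^ 2 := by rw [sq_abs]
    have hfact : (2 * 3 ^ k : ℝ) ≤ (k + 2)! := by
      exact_mod_cast two_mul_three_pow_le_factorial k
    calc (s * y) ^ (k + 2) / (k + 2)! ≤ s ^ (k + 2) * y ^ 2 / (2 * 3 ^ k) := by gcongr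
      _ = y ^ 2 * (s ^ 2 / 2) * (s / 3) ^ k := by rw [div_pow]; ring
  have hgeom : HasSum (fun k : ℕ => y ^ 2 * (s ^ 2 / 2) * (s / 3) ^ k)
      (y ^ 2 * (s ^ 2 / (2 * (1 - s / 3)))) := by
    have h := (hasSum_geometric_of_lt_one (by positivity) (by linarith : s / 3 < 1)).mul_left
      (y ^ 2 * (s ^ 2 / 2))
    rwa [mul_assoc, ← div_eq_mul_inv, div_div] at h
  linarith [hasSum_le hterm (hasSum_pow_div_factorial_add_two (s * y)) hgeom]

noncomputable def bernsteinTail (V x : ℝ) : ℝ := exp (-(x ^ 2 / (2 * (V + x / 3))))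

section Bernstein

variable {Ω ι : Type*} [MeasurableSpace Ω] {μ : Measure Ω} [IsProbabilityMeasure μ]

lemma mgf_le_exp_of_abs_le_one {Z : Ω → ℝ} (hZ : Measurable Z) (hbdd : ∀ ω, |Z ω| ≤ 1)
    (hmean : μ[Z] = 0) {τ : ℝ} (hτ0 : 0 ≤ τ) (hτ3 : τ < 3) :
    mgf Z μ τ ≤ exp (μ[Z ^ 2] * (τ ^ 2 / (2 * (1 - τ / 3)))) := by
  set ψ := τ ^ 2 / (2 * (1 - τ / 3))
  have hZint : Integrable Z μ :=
    .of_bound hZ.aestronglyMeasurable 1 (.of_forall fun ω => (Real.norm_eq_abs _).trans_le (hbdd ω))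
  have hZ2int : Integrable (Z ^ 2) μ := by
    refine .of_bound (hZ.pow_const 2).aestronglyMeasurable 1 (.of_forall fun ω => ?_)
    simpa [abs_le_one_iff_mul_self_le_one, sq] using hbdd ω
  have hlin : Integrable (fun ω => 1 + τ * Z ω) μ := (integrable_const 1).add (hZint.const_mul τ)
  calc mgf Z μ τ ≤ ∫ ω, 1 + τ * Z ω + (Z ^ 2) ω * ψ ∂μ :=
        integral_mono_of_nonneg (.of_forall fun ω => (exp_pos _).le)
          (hlin.add (hZ2int.mul_const ψ))
          (.of_forall fun ω => exp_mul_le_one_add_mul_add_sq_mul hτ0 hτ3 (hbdd ω))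
    _ = 1 + μ[Z ^ 2] * ψ := by
        rw [integral_add hlin (hZ2int.mul_const ψ),
          integral_add (integrable_const 1) (hZint.const_mul τ), integral_const,
          integral_const_mul, integral_mul_const, hmean]
        simp
    _ ≤ exp (μ[Z ^ 2] * ψ) := by linarith [add_one_le_exp (μ[Z ^ 2] * ψ)]

variable {Z : ι → Ω → ℝ} {S : Finset ι} {V : ℝ}

lemma measureReal_le_sum_le_exp (hZ : ∀ i, Measurable (Z i)) (hind : iIndepFun Z μ)
    (hbdd : ∀ i ∈ S, ∀ ω, |Z i ω| ≤ 1) (hmean : ∀ i ∈ S, μ[Z i] = 0)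
    (hV : ∑ i ∈ S, μ[Z i ^ 2] ≤ V) (x : ℝ) {τ : ℝ} (hτ0 : 0 ≤ τ) (hτ3 : τ < 3) :
    μ.real {ω | x ≤ ∑ i ∈ S, Z i ω} ≤ exp (-τ * x + V * (τ ^ 2 / (2 * (1 - τ / 3)))) := by
  set ψ := τ ^ 2 / (2 * (1 - τ / 3))
  have hψ : 0 ≤ ψ := div_nonneg (sq_nonneg τ) (by linarith)
  have hexp_int : ∀ i ∈ S, Integrable (fun ω => exp (τ * Z i ω)) μ := fun i hi =>
    .of_bound ((hZ i).const_mul τ).exp.aestronglyMeasurable (exp τ) (.of_forall fun ω => by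
      rw [Real.norm_eq_abs, abs_exp]
      exact exp_le_exp.mpr (by nlinarith [abs_le.mp (hbdd i hi ω)]))
  have hchernoff := measure_ge_le_exp_mul_mgf x hτ0 (hind.integrable_exp_mul_sum hZ hexp_int)
  simp only [Finset.sum_apply] at hchernoff
  calc _ ≤ exp (-τ * x) * mgf (∑ i ∈ S, Z i) μ τ := hchernoff
    _ = exp (-τ * x) * ∏ i ∈ S, mgf (Z i) μ τ := by rw [hind.mgf_sum hZ]
    _ ≤ exp (-τ * x) * ∏ i ∈ S, exp (μ[Z i ^ 2] * ψ) := by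
        gcongr with i hi
        · exact fun i _ => mgf_nonneg
        · exact mgf_le_exp_of_abs_le_one (hZ i) (hbdd i hi) (hmean i hi) hτ0 hτ3
    _ = exp (-τ * x + (∑ i ∈ S, μ[Z i ^ 2]) * ψ) := by
        rw [← exp_sum, ← exp_add, Finset.sum_mul]
    _ ≤ _ := by gcongr

theorem measureReal_le_sum_le_bernsteinTail (hZ : ∀ i, Measurable (Z i))
    (hind : iIndepFun Z μ) (hbdd : ∀ i ∈ S, ∀ ω, |Z i ω| ≤ 1) (hmean : ∀ i ∈ S, μ[Z i] = 0)
    (hV : ∑ i ∈ S, μ[Z i ^ 2] ≤ V) (hV0 : 0 < V) {x : ℝ} (hx : 0 ≤ x) :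
    μ.real {ω | x ≤ ∑ i ∈ S, Z i ω} ≤ bernsteinTail V x := by
  have hD : 0 < V + x / 3 := by positivity
  have hτ3 : x / (V + x / 3) < 3 := by rw [div_lt_iff₀ hD]; linarith
  -- the optimal choice `τ = x / (V + x / 3)` in the Chernoff bound
  convert measureReal_le_sum_le_exp hZ hind hbdd hmean hV x (by positivity) hτ3 using 2
  have h1 : 1 - x / (V + x / 3) / 3 = V / (V + x / 3) := by field_simp; ring
  rw [bernsteinTail, h1]
  field_simp
  congr 1
  ring

theorem measureReal_sum_le_neg_le_bernsteinTail (hZ : ∀ i, Measurable (Z i))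
    (hind : iIndepFun Z μ) (hbdd : ∀ i ∈ S, ∀ ω, |Z i ω| ≤ 1) (hmean : ∀ i ∈ S, μ[Z i] = 0)
    (hV : ∑ i ∈ S, μ[Z i ^ 2] ≤ V) (hV0 : 0 < V) {x : ℝ} (hx : 0 ≤ x) :
    μ.real {ω | ∑ i ∈ S, Z i ω ≤ -x} ≤ bernsteinTail V x := by
  have h := measureReal_le_sum_le_bernsteinTail (Z := fun i => -Z i) (fun i => (hZ i).neg)
    (hind.comp (fun _ => Neg.neg) fun _ => measurable_neg) (fun i hi ω => by simpa using hbdd i hi ω)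
    (fun i hi => by simpa [integral_neg] using hmean i hi) (by simpa using hV) hV0 hx
  simpa [Finset.sum_neg_distrib, le_neg] using h

end Bernstein

section BinomialCount

variable {Ω ι : Type*} [MeasurableSpace Ω] {μ : Measure Ω} [IsProbabilityMeasure μ]

lemma integral_indicator_one_sub_measureReal {A : Set Ω} (hA : MeasurableSet A) :
    ∫ ω, (A.indicator 1 ω - μ.real A) ∂μ = 0 := by
  rw [integral_sub ((integrable_const 1).indicator hA) (integrable_const _),
    integral_indicator_one hA]
  simp

lemma integral_indicator_one_sub_measureReal_sq {A : Set Ω} (hA : MeasurableSet A) :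
    ∫ ω, (A.indicator 1 ω - μ.real A) ^ 2 ∂μ = μ.real A * (1 - μ.real A) := by
  have h (ω : Ω) : (A.indicator 1 ω - μ.real A) ^ 2
      = (1 - 2 * μ.real A) * A.indicator 1 ω + μ.real A ^ 2 := by
    by_cases hω : ω ∈ A
    · simp only [hω, Set.indicator_of_mem, Pi.one_apply, mul_one]
      ring
    · simp [hω]
  simp_rw [h]
  rw [integral_add (((integrable_const 1).indicator hA).const_mul _) (integrable_const _),
    integral_const_mul, integral_indicator_one hA]
  simp only [integral_const, probReal_univ, smul_eq_mul, one_mul]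
  ring

theorem measureReal_card_filter_sub_le_bernsteinTail {X : ι → Ω → ℝ}
    (hX : ∀ i, Measurable (X i)) (hind : iIndepFun X μ) {S : Finset ι} {c p : ℝ}
    (hp : ∀ i ∈ S, μ.real {ω | X i ω ≤ c} = p) {V : ℝ} (hV : #S * (p * (1 - p)) ≤ V)
    (hV0 : 0 < V) {x : ℝ} (hx : 0 ≤ x) :
    μ.real {ω | x ≤ #{i ∈ S | X i ω ≤ c} - #S * p} ≤ bernsteinTail V x ∧
      μ.real {ω | #{i ∈ S | X i ω ≤ c} - #S * p ≤ -x} ≤ bernsteinTail V x := by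
  set Z : ι → Ω → ℝ := fun i ω => {ω | X i ω ≤ c}.indicator 1 ω - p
  have hA (i : ι) : MeasurableSet {ω | X i ω ≤ c} := hX i measurableSet_Iic
  have hZ (i : ι) : Measurable (Z i) := (measurable_one.indicator (hA i)).sub_const p
  have hZind : iIndepFun Z μ := hind.comp (fun _ y => (Set.Iic c).indicator 1 y - p)
    fun _ => (measurable_one.indicator measurableSet_Iic).sub_const p
  have hbdd (i : ι) (hi : i ∈ S) (ω : Ω) : |Z i ω| ≤ 1 := by
    have hp0 : 0 ≤ p := hp i hi ▸ measureReal_nonneg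
    have hp1 : p ≤ 1 := hp i hi ▸ measureReal_le_one
    by_cases hω : X i ω ≤ c
    · simp only [Z, Set.mem_ofPred_eq, hω, Set.indicator_of_mem, Pi.one_apply, abs_le]
      constructor <;> linarith
    · simp only [Z, Set.mem_ofPred_eq, hω, not_false_eq_true, Set.indicator_of_notMem, abs_le]
      constructor <;> linarith
  have hmean (i : ι) (hi : i ∈ S) : μ[Z i] = 0 := by
    simpa only [Z, hp i hi] using integral_indicator_one_sub_measureReal (μ := μ) (hA i)
  have hvar : ∑ i ∈ S, μ[Z i ^ 2] ≤ V := by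
    rw [Finset.sum_congr rfl fun i hi => by
      simpa only [Z, Pi.pow_apply, hp i hi] using
        integral_indicator_one_sub_measureReal_sq (μ := μ) (hA i)]
    simpa using hV
  have hsum (ω : Ω) : ∑ i ∈ S, Z i ω = #{i ∈ S | X i ω ≤ c} - #S * p := by
    simp [Z, Finset.sum_sub_distrib, Set.indicator_apply]
  simp_rw [← hsum]
  exact ⟨measureReal_le_sum_le_bernsteinTail hZ hZind hbdd hmean hvar hV0 hx,
    measureReal_sum_le_neg_le_bernsteinTail hZ hZind hbdd hmean hvar hV0 hx⟩

end BinomialCount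

section EmpiricalQuantile

variable {ι : Type*}

noncomputable def empiricalCDF (S : Finset ι) (x : ι → ℝ) (s : ℝ) : ℝ :=
  #{i ∈ S | x i ≤ s} / #S

variable {S : Finset ι} {x : ι → ℝ} {γ c : ℝ}

lemma empiricalCDF_mono : Monotone (empiricalCDF S x) := fun s₁ s₂ h => by
  unfold empiricalCDF
  gcongr

lemma empiricalCDF_lt_of_lt_Qminus (hγ : 0 < γ) (h : c < Qminus γ (empiricalCDF S x)) :
    empiricalCDF S x c < γ := by
  have hbdd : BddBelow {s | γ ≤ empiricalCDF S x s} := by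
    obtain ⟨m, hm⟩ := (S.image x).bddBelow
    refine ⟨m, fun s hs => ?_⟩
    obtain ⟨i, hi⟩ : {i ∈ S | x i ≤ s}.Nonempty := by
      rw [← Finset.card_pos, Nat.pos_iff_ne_zero]
      intro h0
      simp only [Set.mem_ofPred_eq, empiricalCDF, h0, CharP.cast_eq_zero, zero_div] at hs
      linarith
    rw [Finset.mem_filter] at hi
    exact (hm (Finset.mem_coe.2 (Finset.mem_image_of_mem x hi.1))).trans hi.2
  by_contra! hc
  exact h.not_ge (csInf_le hbdd hc)

lemma le_empiricalCDF_of_Qminus_lt (hS : S.Nonempty) (hγ : γ ≤ 1)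
    (h : Qminus γ (empiricalCDF S x) < c) : γ ≤ empiricalCDF S x c := by
  have hne : {s | γ ≤ empiricalCDF S x s}.Nonempty := by
    refine ⟨(S.image x).max' (hS.image x), ?_⟩
    have hall : {i ∈ S | x i ≤ (S.image x).max' (hS.image x)} = S :=
      Finset.filter_true_of_mem fun i hi => Finset.le_max' _ _ (Finset.mem_image_of_mem x hi)
    simpa [empiricalCDF, hall, hS.card_pos.ne'] using hγ
  obtain ⟨s, hs, hsc⟩ := exists_lt_of_csInf_lt hne h
  exact hs.trans (empiricalCDF_mono hsc.le)

end EmpiricalQuantile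

section QuantileDeviation

variable {Ω ι : Type*} [MeasurableSpace Ω] {μ : Measure Ω} [IsProbabilityMeasure μ]

lemma exists_measureReal_le_eq {X : Ω → ℝ} (hX : Measurable X)
    (hcont : Continuous fun s => μ.real {ω | X ω ≤ s}) {p : ℝ} (hp0 : 0 < p) (hp1 : p < 1) :
    ∃ c, μ.real {ω | X ω ≤ c} = p := by
  have := Measure.isProbabilityMeasure_map (μ := μ) hX.aemeasurable
  have hcdf : (fun s => μ.real {ω | X ω ≤ s}) = cdf (μ.map X) := by
    ext s
    rw [cdf_eq_real, map_measureReal_apply hX measurableSet_Iic]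
    rfl
  rw [hcdf] at hcont
  obtain ⟨a, ha⟩ := ((tendsto_cdf_atBot (μ.map X)).eventually_lt_const hp0).exists
  obtain ⟨b, hb⟩ := ((tendsto_cdf_atTop (μ.map X)).eventually_const_lt hp1).exists
  obtain ⟨c, hc⟩ := mem_range_of_exists_le_of_exists_ge hcont ⟨a, ha.le⟩ ⟨b, hb.le⟩
  exact ⟨c, (congrFun hcdf c).trans hc⟩

lemma monotone_measureReal_le (X : Ω → ℝ) : Monotone fun s => μ.real {ω | X ω ≤ s} :=
  fun _ _ hab => measureReal_mono fun _ hω => le_trans hω hab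

variable {X : ι → Ω → ℝ} {S : Finset ι} {G : ℝ → ℝ} {γ e : ℝ}

lemma measureReal_add_lt_cdf_empiricalQuantile_le (hX : ∀ i, Measurable (X i))
    (hind : iIndepFun X μ) (hS : S.Nonempty) (hGcont : Continuous G)
    (hG : ∀ i ∈ S, ∀ s, μ.real {ω | X i ω ≤ s} = G s) (hγ0 : 0 < γ) (he : 0 < e) :
    μ.real {ω | γ + e < G (Qminus γ (empiricalCDF S fun i => X i ω))}
      ≤ bernsteinTail (#S * (γ * (1 - γ) + e)) (e * #S) := by
  obtain ⟨i₀, hi₀⟩ := hS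
  have hG₀ : (fun s => μ.real {ω | X i₀ ω ≤ s}) = G := funext (hG i₀ hi₀)
  have hScard : (0 : ℝ) < #S := by exact_mod_cast Finset.card_pos.2 ⟨i₀, hi₀⟩
  rcases lt_or_ge (γ + e) 1 with hlt | hge
  · obtain ⟨c, hc⟩ := exists_measureReal_le_eq (hX i₀) (hG₀ ▸ hGcont) (by linarith) hlt
    rw [hG i₀ hi₀] at hc
    have hp (i : ι) (hi : i ∈ S) : μ.real {ω | X i ω ≤ c} = γ + e := by rw [hG i hi, hc]
    have hv : 0 < γ * (1 - γ) + e := by nlinarith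
    have htail := (measureReal_card_filter_sub_le_bernsteinTail hX hind hp
      (mul_le_mul_of_nonneg_left (by nlinarith) hScard.le) (mul_pos hScard hv)
      (mul_nonneg he.le hScard.le)).2
    refine (measureReal_mono fun ω hω => ?_).trans htail
    have hcq : c < Qminus γ (empiricalCDF S fun i => X i ω) :=
      (hG₀ ▸ monotone_measureReal_le (X i₀)).reflect_lt (hc ▸ hω)
    have hlow := empiricalCDF_lt_of_lt_Qminus hγ0 hcq
    rw [empiricalCDF, div_lt_iff₀ hScard] at hlow
    rw [Set.mem_ofPred_eq]
    linarith
  · have hempty : {ω | γ + e < G (Qminus γ (empiricalCDF S fun i => X i ω))} = ∅ :=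
      Set.eq_empty_of_forall_notMem fun ω hω =>
        (hω.trans_le ((hG i₀ hi₀ _).symm.trans_le measureReal_le_one)).not_ge hge
    rw [hempty, measureReal_empty]
    exact (exp_pos _).le

lemma measureReal_cdf_empiricalQuantile_lt_sub_le (hX : ∀ i, Measurable (X i))
    (hind : iIndepFun X μ) (hS : S.Nonempty) (hGcont : Continuous G)
    (hG : ∀ i ∈ S, ∀ s, μ.real {ω | X i ω ≤ s} = G s) (hγ1 : γ ≤ 1) (he : 0 < e) :
    μ.real {ω | G (Qminus γ (empiricalCDF S fun i => X i ω)) < γ - e}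
      ≤ bernsteinTail (#S * (γ * (1 - γ) + e)) (e * #S) := by
  obtain ⟨i₀, hi₀⟩ := id hS
  have hG₀ : (fun s => μ.real {ω | X i₀ ω ≤ s}) = G := funext (hG i₀ hi₀)
  have hScard : (0 : ℝ) < #S := by exact_mod_cast Finset.card_pos.2 ⟨i₀, hi₀⟩
  rcases lt_or_ge 0 (γ - e) with hpos | hle
  · obtain ⟨c, hc⟩ := exists_measureReal_le_eq (hX i₀) (hG₀ ▸ hGcont) hpos (by linarith)
    rw [hG i₀ hi₀] at hc
    have hp (i : ι) (hi : i ∈ S) : μ.real {ω | X i ω ≤ c} = γ - e := by rw [hG i hi, hc]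
    have hv : 0 < γ * (1 - γ) + e := by nlinarith
    have htail := (measureReal_card_filter_sub_le_bernsteinTail hX hind hp
      (mul_le_mul_of_nonneg_left (by nlinarith) hScard.le) (mul_pos hScard hv)
      (mul_nonneg he.le hScard.le)).1
    refine (measureReal_mono fun ω hω => ?_).trans htail
    have hqc : Qminus γ (empiricalCDF S fun i => X i ω) < c :=
      (hG₀ ▸ monotone_measureReal_le (X i₀)).reflect_lt (hc ▸ hω)
    have hhigh := le_empiricalCDF_of_Qminus_lt hS hγ1 hqc
    rw [empiricalCDF, le_div_iff₀ hScard] at hhigh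
    rw [Set.mem_ofPred_eq]
    linarith
  · have hempty : {ω | G (Qminus γ (empiricalCDF S fun i => X i ω)) < γ - e} = ∅ :=
      Set.eq_empty_of_forall_notMem fun ω hω =>
        ((measureReal_nonneg.trans_eq (hG i₀ hi₀ _)).trans_lt hω).not_ge hle
    rw [hempty, measureReal_empty]
    exact (exp_pos _).le

theorem one_sub_two_mul_bernsteinTail_le_measureReal_abs_cdf_empiricalQuantile_sub_le
    (hX : ∀ i, Measurable (X i)) (hind : iIndepFun X μ) (hS : S.Nonempty) (hGcont : Continuous G)
    (hG : ∀ i ∈ S, ∀ s, μ.real {ω | X i ω ≤ s} = G s) (hγ0 : 0 < γ) (hγ1 : γ ≤ 1) (he : 0 < e) :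
    1 - 2 * bernsteinTail (#S * (γ * (1 - γ) + e)) (e * #S)
      ≤ μ.real {ω | |G (Qminus γ (empiricalCDF S fun i => X i ω)) - γ| ≤ e} := by
  set E := {ω | |G (Qminus γ (empiricalCDF S fun i => X i ω)) - γ| ≤ e}
  have hcompl : Eᶜ ⊆ {ω | γ + e < G (Qminus γ (empiricalCDF S fun i => X i ω))}
      ∪ {ω | G (Qminus γ (empiricalCDF S fun i => X i ω)) < γ - e} := fun ω hω => by
    simp only [E, Set.mem_compl_iff, Set.mem_ofPred_eq, not_le, lt_abs] at hω
    rcases hω with h | h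
    · exact Or.inl (by rw [Set.mem_ofPred_eq]; linarith)
    · exact Or.inr (by rw [Set.mem_ofPred_eq]; linarith)
  have hupper := measureReal_add_lt_cdf_empiricalQuantile_le hX hind hS hGcont hG hγ0 he
  have hlower := measureReal_cdf_empiricalQuantile_lt_sub_le hX hind hS hGcont hG hγ1 he
  calc 1 - 2 * bernsteinTail (#S * (γ * (1 - γ) + e)) (e * #S)
      ≤ μ.real (E ∪ Eᶜ) - μ.real Eᶜ := by
        rw [Set.union_compl_self, probReal_univ]
        linarith [(measureReal_mono (μ := μ) hcompl).trans (measureReal_union_le _ _)]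
    _ ≤ μ.real E := by linarith [measureReal_union_le (μ := μ) E Eᶜ]

end QuantileDeviation

lemma bernsteinTail_le_exp_neg {b a L e : ℝ} (hb : 0 < b) (ha : 0 ≤ a) (hL : 0 < L)
    (he : e = 5 / 4 * √(2 * a * L / b) + 4 * L / b) :
    bernsteinTail (b * (a + e)) (e * b) ≤ exp (-L) := by
  set u := √(2 * a * L / b)
  have hu : u ^ 2 * b = 2 * a * L := by
    rw [sq_sqrt (by positivity)]
    field_simp
  have heb : e * b = 5 / 4 * u * b + 4 * L := by
    rw [he]
    field_simp
  have hub : 0 ≤ u * b := mul_nonneg (sqrt_nonneg _) hb.le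
  have hD : 0 < b * (a + e) + e * b / 3 := by nlinarith [mul_nonneg hb.le ha]
  unfold bernsteinTail
  gcongr
  rw [le_div_iff₀ (by linarith)]
  nlinarith [sq_nonneg (u * b), mul_nonneg hub hL.le]

theorem stmt16_general {Ω : Type*} [MeasurableSpace Ω] (μ : Measure Ω) [IsProbabilityMeasure μ]
    (t : ℕ) (ht : 0 < t) (B : Fin t → ℕ) (hB : ∀ j, 0 < B j)
    (U : ((j : Fin t) × Fin (B j)) → Ω → ℝ)
    (hmeas : ∀ p, Measurable (U p))
    (hind : iIndepFun U μ)
    (F : Fin t → ℝ → ℝ)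
    (hF : ∀ (j : Fin t) (i : Fin (B j)) (s : ℝ),
      F j s = (μ {ω | U ⟨j, i⟩ ω ≤ s}).toReal)
    (hcont : ∀ j, Continuous (F j))
    (K : ℕ) (hK1 : 1 ≤ K)
    (hstat : ∀ j : Fin t, t - K ≤ j.val →
      F j = F ⟨t - 1, Nat.sub_lt ht Nat.one_pos⟩)
    (α δ : ℝ) (hα : α ∈ Set.Ioo (0 : ℝ) 1) (hδ : δ ∈ Set.Ioo (0 : ℝ) 1)
    (BtK : ℝ)
    (hBtK : BtK = ((Finset.univ.filter
      (fun p : (j : Fin t) × Fin (B j) => t - K ≤ p.1.val)).card : ℝ)) :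
    1 - δ ≤ (μ {ω |
      |F ⟨t - 1, Nat.sub_lt ht Nat.one_pos⟩
          (Qminus (1 - α) (fun s => ((Finset.univ.filter
            (fun p : (j : Fin t) × Fin (B j) =>
              t - K ≤ p.1.val ∧ U p ω ≤ s)).card : ℝ) / BtK))
        - (1 - α)| ≤
      (5 / 4) * Real.sqrt (2 * α * (1 - α) * Real.log (2 / δ) / BtK) +
        4 * Real.log (2 / δ) / BtK}).toReal := by
  obtain ⟨hα0, hα1⟩ := hα
  obtain ⟨hδ0, hδ1⟩ := hδ
  subst hBtK
  set last : Fin t := ⟨t - 1, Nat.sub_lt ht Nat.one_pos⟩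
  set S : Finset ((j : Fin t) × Fin (B j)) := {p | t - K ≤ p.1.val}
  have hS : S.Nonempty := ⟨⟨last, ⟨0, hB last⟩⟩, by simp only [S, last, mem_filter, mem_univ, true_and]; omega⟩
  have hG (p) (hp : p ∈ S) (s : ℝ) : μ.real {ω | U p ω ≤ s} = F last s := by
    rw [← hstat p.1 (Finset.mem_filter.1 hp).2, hF p.1 p.2]
    rfl
  have hL : 0 < log (2 / δ) := log_pos (by rw [lt_div_iff₀ hδ0]; linarith)
  set e := 5 / 4 * √(2 * α * (1 - α) * log (2 / δ) / #S) + 4 * log (2 / δ) / #S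
  have hScard : (0 : ℝ) < #S := by exact_mod_cast hS.card_pos
  have he : 0 < e := by positivity
  have key := one_sub_two_mul_bernsteinTail_le_measureReal_abs_cdf_empiricalQuantile_sub_le
    hmeas hind hS (hcont last) hG (γ := 1 - α) (by linarith) (by linarith) he
  rw [show (1 - α) * (1 - (1 - α)) = α * (1 - α) by ring] at key
  have htail := bernsteinTail_le_exp_neg (a := α * (1 - α)) hScard
    (mul_nonneg hα0.le (by linarith)) hL (by rw [← mul_assoc])
  rw [exp_neg, exp_log (by positivity), inv_div] at htail
  calc 1 - δ ≤ 1 - 2 * bernsteinTail (#S * (α * (1 - α) + e)) (e * #S) := by linarith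
    _ ≤ _ := key
    _ = _ := by unfold empiricalCDF; simp only [S, Finset.filter_filter]; rfl

/-- Change-point example: if the distributions in the last `K` periods all equal the
current one (common continuous CDF `F t`), then the pooled empirical `(1-α)`-quantile
`q̂_{t,K}` over the last `K` periods satisfies, with probability at least `1 - δ`,
`|F_t(q̂_{t,K}) - (1-α)| ≤ (5/4)√(2α(1-α)log(2/δ)/B_{t,K}) + 4 log(2/δ)/B_{t,K}`. -/
theorem stmt16 {Ω : Type*} [MeasurableSpace Ω] (μ : Measure Ω) [IsProbabilityMeasure μ]
    (t : ℕ) (ht : 0 < t) (B : Fin t → ℕ) (hB : ∀ j, 0 < B j)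
    (U : ((j : Fin t) × Fin (B j)) → Ω → ℝ)
    (hmeas : ∀ p, Measurable (U p))
    (hind : iIndepFun U μ)
    (F : Fin t → ℝ → ℝ)
    (hF : ∀ (j : Fin t) (i : Fin (B j)) (s : ℝ),
      F j s = (μ {ω | U ⟨j, i⟩ ω ≤ s}).toReal)
    (hcont : ∀ j, Continuous (F j))
    (K : ℕ) (hK1 : 1 ≤ K) (hKt : K ≤ t - 1)
    (hstat : ∀ j : Fin t, t - K ≤ j.val →
      F j = F ⟨t - 1, Nat.sub_lt ht Nat.one_pos⟩)
    (α δ : ℝ) (hα : α ∈ Set.Ioo (0 : ℝ) 1) (hδ : δ ∈ Set.Ioo (0 : ℝ) 1)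
    (BtK : ℝ)
    (hBtK : BtK = ((Finset.univ.filter
      (fun p : (j : Fin t) × Fin (B j) => t - K ≤ p.1.val)).card : ℝ)) :
    1 - δ ≤ (μ {ω |
      |F ⟨t - 1, Nat.sub_lt ht Nat.one_pos⟩
          (Qminus (1 - α) (fun s => ((Finset.univ.filter
            (fun p : (j : Fin t) × Fin (B j) =>
              t - K ≤ p.1.val ∧ U p ω ≤ s)).card : ℝ) / BtK))
        - (1 - α)| ≤
      (5 / 4) * Real.sqrt (2 * α * (1 - α) * Real.log (2 / δ) / BtK) +
        4 * Real.log (2 / δ) / BtK}).toReal :=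
  stmt16_general μ t ht B hB U hmeas hind F hF hcont K hK1 hstat α δ hα hδ BtK hBtK
end
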